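/- arXiv:2108.09994 — 6 statements merged into one kernel-verified Lean document; each statement's English description precedes it below -/
import Mathlib

section
/- For every finite poset P, the queue-number of P is at most the square of the width of P, i.e., qn(P) ≤ width(P)². -/
/-- `L` is (the ranking function of) a linear extension of the partial order on `α`:
an injective map to `ℕ` that respects the strict order. -/
def IsLinearExtension {α : Type*} [PartialOrder α] (L : α → ℕ) : Prop :=
  Function.Injective L ∧ ∀ a b : α, a < b → L a < L b

/-- `L` contains a `k`-rainbow: `k` cover edges `(a_i, b_i)` with
`a_1 < a_2 < ⋯ < a_k < b_k < ⋯ < b_2 < b_1` in `L`. -/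
def HasRainbow {α : Type*} [PartialOrder α] (L : α → ℕ) (k : ℕ) : Prop :=
  ∃ e : Fin k → α × α,
    (∀ i : Fin k, (e i).1 ⋖ (e i).2) ∧
    (∀ i : Fin k, L (e i).1 < L (e i).2) ∧
    (∀ i j : Fin k, i < j → L (e i).1 < L (e j).1 ∧ L (e j).2 < L (e i).2)

/-- The queue-number of the poset `α`: the least `k` such that some linear extension
contains no `(k+1)`-rainbow. -/
noncomputable def queueNumber (α : Type*) [PartialOrder α] : ℕ :=
  sInf {k | ∃ L : α → ℕ, IsLinearExtension L ∧ ¬ HasRainbow L (k + 1)}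

/-- The width of the poset `α`: the maximum size of an antichain. -/
noncomputable def posetWidth (α : Type*) [PartialOrder α] : ℕ :=
  sSup {n | ∃ s : Finset α, IsAntichain (· ≤ ·) (s : Set α) ∧ s.card = n}


open Classical in
/-- Rank: length of longest `r`-increasing sequence of indices ending at `n`. -/
noncomputable def chainRank (r : ℕ → ℕ → Prop) : ℕ → ℕ
  | n => (Finset.range n).attach.sup
      (fun j => if r j.1 n then chainRank r j.1 + 1 else 0)
decreasing_by exact Finset.mem_range.mp j.2

open Classical in
lemma chainRank_eq (r : ℕ → ℕ → Prop) (n : ℕ) :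
    chainRank r n = (Finset.range n).attach.sup
      (fun j => if r j.1 n then chainRank r j.1 + 1 else 0) := by
  rw [chainRank]

lemma chainRank_lt {r : ℕ → ℕ → Prop} {j n : ℕ} (hj : j < n) (h : r j n) :
    chainRank r j < chainRank r n := by
  classical
  have h2 := Finset.le_sup (f := fun j' : {x // x ∈ Finset.range n} =>
    if r j'.1 n then chainRank r j'.1 + 1 else 0)
    (Finset.mem_attach _ ⟨j, Finset.mem_range.mpr hj⟩)
  simp only [if_pos h] at h2
  rw [chainRank_eq r n]
  omega

lemma chainRank_chain (r : ℕ → ℕ → Prop) (n : ℕ) :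
    ∃ g : ℕ → ℕ, g (chainRank r n) = n ∧
      (∀ m < chainRank r n, g m < g (m + 1) ∧ r (g m) (g (m + 1))) ∧
      (∀ m ≤ chainRank r n, g m ≤ n) := by
  classical
  induction n using Nat.strong_induction_on with
  | _ n ih =>
    by_cases h0 : chainRank r n = 0
    · exact ⟨fun _ => n, by simp [h0]⟩
    · have hn0 : n ≠ 0 := by
        rintro rfl
        apply h0
        rw [chainRank_eq r 0]
        simp
      have hne : (Finset.range n).attach.Nonempty :=
        Finset.attach_nonempty_iff.mpr (Finset.nonempty_range_iff.mpr hn0)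
      obtain ⟨j, _, hj⟩ := Finset.exists_mem_eq_sup _ hne
        (fun j : {x // x ∈ Finset.range n} => if r j.1 n then chainRank r j.1 + 1 else 0)
      rw [← chainRank_eq] at hj
      have hrj : r j.1 n := by
        by_contra hr
        rw [if_neg hr] at hj
        exact h0 hj
      rw [if_pos hrj] at hj
      have hjn : j.1 < n := Finset.mem_range.mp j.2
      obtain ⟨g', hg1, hg2, hg3⟩ := ih j.1 hjn
      have hcj : chainRank r j.1 = chainRank r n - 1 := by omega
      refine ⟨fun m => if m = chainRank r n then n else g' m, by simp, ?_, ?_⟩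
      · intro m hm
        have hm' : m ≠ chainRank r n := by omega
        by_cases hm1 : m + 1 = chainRank r n
        · have hmc : m = chainRank r j.1 := by omega
          beta_reduce
          rw [if_neg hm', if_pos hm1, hmc, hg1]
          exact ⟨hjn, hrj⟩
        · have hmj : m < chainRank r j.1 := by omega
          simp only [if_neg hm', if_neg hm1]
          exact hg2 m hmj
      · intro m hm
        by_cases hmn : m = chainRank r n
        · simp [hmn]
        · simp only [if_neg hmn]
          exact le_trans (hg3 m (by omega)) hjn.le

section Main
variable {α : Type*} [Fintype α] [PartialOrder α]

lemma antichain_card_le {s : Finset α} (h : IsAntichain (· ≤ ·) (s : Set α)) :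
    s.card ≤ posetWidth α := by
  apply le_csSup
  · exact ⟨Fintype.card α, fun n ⟨t, _, hc⟩ => hc ▸ t.card_le_univ⟩
  · exact ⟨s, h, rfl⟩

lemma exists_linear_extension : ∃ L : α → ℕ, IsLinearExtension L := by
  classical
  set L : α → ℕ := fun a =>
    (Finset.univ.filter fun b : α => toLinearExtension b ≤ toLinearExtension a).card with hL
  have hmono : ∀ a b : α, toLinearExtension a < toLinearExtension b → L a < L b := by
    intro a b hab
    apply Finset.card_lt_card
    constructor
    · intro z hz
      simp only [Finset.mem_filter, Finset.mem_univ, true_and] at hz ⊢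
      exact hz.trans hab.le
    · intro hsub
      have hb : b ∈ Finset.univ.filter
          fun z : α => toLinearExtension z ≤ toLinearExtension b := by simp
      have := hsub hb
      simp only [Finset.mem_filter, Finset.mem_univ, true_and] at this
      exact absurd this (not_le_of_gt hab)
  have hinj : Function.Injective (toLinearExtension (α := α)) := fun a b h => h
  refine ⟨L, ?_, ?_⟩
  · intro a b hab
    by_contra hne
    rcases lt_or_gt_of_ne (fun h : toLinearExtension a = toLinearExtension b =>
      hne (hinj h)) with h | h
    · exact absurd hab (hmono a b h).ne
    · exact absurd hab.symm (hmono b a h).ne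
  · intro a b hab
    apply hmono
    exact lt_of_le_of_ne (toLinearExtension.monotone hab.le)
      (fun h => hab.ne (hinj h))

lemma no_big_rainbow {L : α → ℕ} (hL : IsLinearExtension L) :
    ¬ HasRainbow L (posetWidth α ^ 2 + 1) := by
  classical
  set w := posetWidth α with hw
  set k := w ^ 2 + 1 with hk
  rintro ⟨e, hcov, hlt, hord⟩
  -- index comparisons
  have hLo : ∀ i j : Fin k, (e i).1 < (e j).1 → i < j := by
    intro i j hij
    have hLij : L (e i).1 < L (e j).1 := hL.2 _ _ hij
    rcases lt_trichotomy i j with h | h | h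
    · exact h
    · rw [h] at hLij; omega
    · exact absurd (hord j i h).1 (by omega)
  -- the relation on indices
  set r : ℕ → ℕ → Prop := fun i j =>
    ∃ hi : i < k, ∃ hj : j < k, (e ⟨i, hi⟩).1 < (e ⟨j, hj⟩).1 with hr
  -- from a chain of indices of length w+1, we get an antichain of size w+1 (the b's)
  have key : ∀ t : ℕ → Fin k, (∀ m m' : ℕ, m < m' → m' ≤ w → (e (t m)).1 < (e (t m')).1) →
      False := by
    intro t ht
    have htlt : ∀ m m' : ℕ, m < m' → m' ≤ w → t m < t m' := by
      intro m m' h1 h2; exact hLo _ _ (ht m m' h1 h2)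
    set s : Finset α := (Finset.range (w + 1)).image (fun m => (e (t m)).2) with hs
    have hinj : ∀ m ∈ Finset.range (w+1), ∀ m' ∈ Finset.range (w+1),
        (e (t m)).2 = (e (t m')).2 → m = m' := by
      intro m hm m' hm' heq
      have hm2 := Finset.mem_range.mp hm
      have hm'2 := Finset.mem_range.mp hm'
      by_contra hne
      rcases Nat.lt_or_ge m m' with h | h
      · have := (hord _ _ (htlt m m' h (by omega))).2
        rw [heq] at this; omega
      · have h' : m' < m := by omega
        have := (hord _ _ (htlt m' m h' (by omega))).2
        rw [heq] at this; omega
    have hcard : s.card = w + 1 := by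
      rw [hs, Finset.card_image_of_injOn, Finset.card_range]
      intro m hm m' hm' heq
      exact hinj m hm m' hm' heq
    have hanti : IsAntichain (· ≤ ·) (s : Set α) := by
      intro x hx y hy hne hxy
      simp only [hs, Finset.coe_image, Set.mem_image, Finset.mem_coe,
        Finset.mem_range] at hx hy
      obtain ⟨m, hm, rfl⟩ := hx
      obtain ⟨m', hm', rfl⟩ := hy
      have hmm : m ≠ m' := fun h => hne (by rw [h])
      have hxylt : (e (t m)).2 < (e (t m')).2 := lt_of_le_of_ne hxy hne
      rcases Nat.lt_or_ge m m' with h | h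
      · -- m < m' : L (e (t m')).2 < L (e (t m)).2 contradicts P-order
        have h1 := (hord _ _ (htlt m m' h (by omega))).2
        have h2 := hL.2 _ _ hxylt
        omega
      · -- m' < m : (e (t m)).1 strictly between (e (t m')).1 and (e (t m')).2
        have h' : m' < m := by omega
        have hab : (e (t m')).1 < (e (t m)).1 := ht m' m h' (by omega)
        have hbb : (e (t m)).1 < (e (t m')).2 :=
          lt_trans (hcov (t m)).1 hxylt
        exact (hcov (t m')).2 hab hbb
    have := antichain_card_le hanti
    omega
  -- case split on whether some rank is ≥ w
  by_cases hbig : ∃ n < k, w ≤ chainRank r n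
  · obtain ⟨n, hn, hcn⟩ := hbig
    obtain ⟨g, hg1, hg2, hg3⟩ := chainRank_chain r n
    -- build t : ℕ → Fin k
    have hgk : ∀ m ≤ chainRank r n, g m < k := fun m hm => lt_of_le_of_lt (hg3 m hm) hn
    set t : ℕ → Fin k := fun m => if h : m ≤ chainRank r n ∧ g m < k then ⟨g m, h.2⟩ else ⟨0, by omega⟩ with htdef
    apply key t
    -- need: m < m' ≤ w → a's increase; first consecutive, then transitivity
    have hstep : ∀ m < chainRank r n, (e (t m)).1 < (e (t (m+1))).1 := by
      intro m hm
      obtain ⟨_, hrr⟩ := hg2 m hm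
      obtain ⟨hi, hj, hlt'⟩ := hrr
      have h1 : m ≤ chainRank r n ∧ g m < k := ⟨hm.le, hi⟩
      have h2 : m + 1 ≤ chainRank r n ∧ g (m+1) < k := ⟨hm, hj⟩
      simp only [htdef, dif_pos h1, dif_pos h2]
      exact hlt'
    intro m m' hmm' hm'w
    have hm'c : m' ≤ chainRank r n := le_trans hm'w hcn
    clear hm'w
    induction m' with
    | zero => omega
    | succ p ihp =>
      rcases Nat.lt_or_ge m p with h | h
      · exact lt_trans (ihp h (by omega)) (hstep p (by omega))
      · have : m = p := by omega
        subst this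
        exact hstep m (by omega)
  · -- all ranks < w : pigeonhole
    push_neg at hbig
    have hmap : ∀ i : Fin k, i ∈ (Finset.univ : Finset (Fin k)) →
        chainRank r i.1 ∈ Finset.range w := by
      intro i _
      exact Finset.mem_range.mpr (hbig i.1 i.2)
    have hcard : (Finset.range w).card * w < (Finset.univ : Finset (Fin k)).card := by
      simp [hk]
      nlinarith [sq_nonneg w]
    obtain ⟨v, _, hv⟩ := Finset.exists_lt_card_fiber_of_mul_lt_card_of_maps_to hmap hcard
    set F := Finset.univ.filter (fun i : Fin k => chainRank r i.1 = v) with hF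
    set s : Finset α := F.image (fun i => (e i).1) with hs
    have hinj : Set.InjOn (fun i : Fin k => (e i).1) F := by
      intro i _ j _ heq
      have heq' : (e i).1 = (e j).1 := heq
      by_contra hne
      rcases lt_or_gt_of_ne hne with h | h
      · have := (hord i j h).1; rw [heq'] at this; omega
      · have := (hord j i h).1; rw [heq'] at this; omega
    have hcards : s.card = F.card := Finset.card_image_of_injOn hinj
    have hanti : IsAntichain (· ≤ ·) (s : Set α) := by
      intro x hx y hy hne hxy
      simp only [hs, Finset.coe_image, Set.mem_image, Finset.mem_coe] at hx hy
      obtain ⟨i, hi, rfl⟩ := hx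
      obtain ⟨j, hj, rfl⟩ := hy
      have hij : (e i).1 < (e j).1 := lt_of_le_of_ne hxy hne
      have hlt' : i < j := hLo i j hij
      have : chainRank r i.1 < chainRank r j.1 :=
        chainRank_lt hlt' ⟨i.2, j.2, by simpa using hij⟩
      rw [hF] at hi hj
      simp only [Finset.mem_filter] at hi hj
      omega
    have h1 := antichain_card_le hanti
    rw [hcards] at h1
    omega

end Main

/-- For every finite poset, the queue-number is at most the square of the width. -/
theorem queueNumber_le_width_sq (α : Type*) [Fintype α] [PartialOrder α] :
    queueNumber α ≤ posetWidth α ^ 2 := by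
  obtain ⟨L, hL⟩ := exists_linear_extension (α := α)
  exact Nat.sInf_le ⟨L, hL, no_big_rainbow hL⟩
end

section
/- Let P be a finite poset and let C_1, …, C_w be a partition of its elements into chains. For i, j ∈ {1,…,w}, let Q_{i,j} be the set of cover edges (u,v) of P with u ∈ C_i and v ∈ C_j. Then for every linear extension L of P, each set Q_{i,j} is a queue with respect to L, i.e., no two edges of Q_{i,j} are nested in L. (In particular, this single partition of the cover edges into w² parts works simultaneously for every linear extension of P.) -/
/-- Given a partition of a finite poset into `w` chains (fibers of `c`), for every
linear extension `L`, the set `Q_{i,j}` of cover edges going from chain `i` to chain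
`j` is a queue: no two of its edges are nested in `L`. -/
theorem chain_partition_gives_queues
    (α : Type*) [Fintype α] [PartialOrder α] (w : ℕ) (c : α → Fin w)
    (hc : ∀ a b : α, c a = c b → a ≤ b ∨ b ≤ a)
    (L : α → ℕ) (hL : IsLinearExtension L)
    (a b c' d : α)
    (had : a ⋖ d) (hbc : b ⋖ c')
    (hi : c a = c b) (hj : c d = c c') :
    ¬ (L a < L b ∧ L b < L c' ∧ L c' < L d) := by
  rintro ⟨h1, h2, h3⟩
  have hab : a < b := by
    rcases hc a b hi with h | h
    · exact lt_of_le_of_ne h (fun e => by simp [e] at h1)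
    · rcases eq_or_lt_of_le h with e | hlt
      · exact absurd e.symm (fun e => by simp [e] at h1)
      · exact absurd (hL.2 _ _ hlt) (by omega)
  have hcd : c' < d := by
    rcases hc c' d hj.symm with h | h
    · exact lt_of_le_of_ne h (fun e => by simp [e] at h3)
    · rcases eq_or_lt_of_le h with e | hlt
      · exact absurd e.symm (fun e => by simp [e] at h3)
      · exact absurd (hL.2 _ _ hlt) (by omega)
  exact had.2 (hab.trans hbc.1) hcd
end

section
/- For each integer u ≥ 1 there exists a finite 2-dimensional poset R_u of width u together with a realizer (L_x, L_y) such that the following holds: for every linear extension L of R_u, if d_x denotes the maximum length of a sequence of elements of R_u that is increasing in L and decreasing in L_x, and d_y denotes the maximum length of a sequence of elements of R_u that is increasing in L and decreasing in L_y, then d_x + d_y ≥ u + 1. -/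
/-- `(Lx, Ly)` is a realizer of the partial order on `α`: two linear orders
(injective rankings) such that `a < b` in the poset iff `a < b` in both. -/
def IsRealizer {α : Type*} [PartialOrder α] (Lx Ly : α → ℕ) : Prop :=
  Function.Injective Lx ∧ Function.Injective Ly ∧
    ∀ a b : α, a < b ↔ Lx a < Lx b ∧ Ly a < Ly b

/-- The maximum length of a sequence of elements that is increasing in `L`
and decreasing in `Lx`. -/
noncomputable def maxIncDec {α : Type*} (L Lx : α → ℕ) : ℕ :=
  sSup {k | ∃ e : Fin k → α,
    (∀ i j : Fin k, i < j → L (e i) < L (e j)) ∧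
    (∀ i j : Fin k, i < j → Lx (e j) < Lx (e i))}

def T : ℕ → Type
  | 0 => Empty
  | n+1 => Option (Bool × T n)

instance instTDE : ∀ n, DecidableEq (T n)
  | 0 => inferInstanceAs (DecidableEq Empty)
  | n+1 => letI := instTDE n; inferInstanceAs (DecidableEq (Option (Bool × T n)))

instance instTFin : ∀ n, Fintype (T n)
  | 0 => inferInstanceAs (Fintype Empty)
  | n+1 => letI := instTFin n; inferInstanceAs (Fintype (Option (Bool × T n)))

def LX : ∀ n, T n → ℕ
  | 0, t => t.elim
  | _+1, none => 0
  | n+1, some (false, t) => 1 + LX n t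
  | n+1, some (true, t) => 1 + 4^n + LX n t

def LY : ∀ n, T n → ℕ
  | 0, t => t.elim
  | n+1, none => 2 * 4^n
  | n+1, some (false, t) => LY n t
  | n+1, some (true, t) => 4^n + LY n t

lemma LX_lt : ∀ n (t : T n), LX n t < 4^n
  | 0, t => t.elim
  | n+1, none => by simp [LX]
  | n+1, some (false, t) => by
      have := LX_lt n t
      have h4 : (1:ℕ) ≤ 4^n := Nat.one_le_pow _ _ (by norm_num)
      simp [LX, pow_succ]; omega
  | n+1, some (true, t) => by
      have := LX_lt n t
      simp [LX, pow_succ]; omega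

lemma LY_lt : ∀ n (t : T n), LY n t < 4^n
  | 0, t => t.elim
  | n+1, none => by
      have h4 : (1:ℕ) ≤ 4^n := Nat.one_le_pow _ _ (by norm_num)
      simp [LY, pow_succ]; omega
  | n+1, some (false, t) => by
      have := LY_lt n t
      have h4 : (1:ℕ) ≤ 4^n := Nat.one_le_pow _ _ (by norm_num)
      simp [LY, pow_succ]; omega
  | n+1, some (true, t) => by
      have := LY_lt n t
      simp [LY, pow_succ]; omega

lemma LX_inj : ∀ n, Function.Injective (LX n)
  | 0 => fun t => t.elim
  | n+1 => by
      have h4 : (1:ℕ) ≤ 4^n := Nat.one_le_pow _ _ (by norm_num)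
      rintro (_ | ⟨b, t⟩) (_ | ⟨c, s⟩) h
      · rfl
      · rcases c with _ | _
        · exfalso; simp only [LX] at h; omega
        · exfalso; simp only [LX] at h
          generalize (4:ℕ)^n = m at h; omega
      · rcases b with _ | _
        · exfalso; simp only [LX] at h; omega
        · exfalso; simp only [LX] at h
          generalize (4:ℕ)^n = m at h; omega
      · have ht := LX_lt n t
        have hs := LX_lt n s
        rcases b with _ | _ <;> rcases c with _ | _
        · simp only [LX] at h
          exact congrArg (fun z => some (false, z)) (LX_inj n (by omega : LX n t = LX n s))
        · exfalso; simp only [LX] at h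
          generalize (4:ℕ)^n = m at h ht hs; omega
        · exfalso; simp only [LX] at h
          generalize (4:ℕ)^n = m at h ht hs; omega
        · simp only [LX] at h
          have : LX n t = LX n s := by generalize (4:ℕ)^n = m at h ht hs; omega
          exact congrArg (fun z => some (true, z)) (LX_inj n this)

lemma LY_inj : ∀ n, Function.Injective (LY n)
  | 0 => fun t => t.elim
  | n+1 => by
      have h4 : (1:ℕ) ≤ 4^n := Nat.one_le_pow _ _ (by norm_num)
      rintro (_ | ⟨b, t⟩) (_ | ⟨c, s⟩) h
      · rfl
      · have hs := LY_lt n s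
        rcases c with _ | _
        · exfalso; simp only [LY] at h
          generalize (4:ℕ)^n = m at h hs; omega
        · exfalso; simp only [LY] at h
          generalize (4:ℕ)^n = m at h hs; omega
      · have ht := LY_lt n t
        rcases b with _ | _
        · exfalso; simp only [LY] at h
          generalize (4:ℕ)^n = m at h ht; omega
        · exfalso; simp only [LY] at h
          generalize (4:ℕ)^n = m at h ht; omega
      · have ht := LY_lt n t
        have hs := LY_lt n s
        rcases b with _ | _ <;> rcases c with _ | _
        · simp only [LY] at h
          exact congrArg (fun z => some (false, z)) (LY_inj n h)
        · exfalso; simp only [LY] at h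
          generalize (4:ℕ)^n = m at h ht hs; omega
        · exfalso; simp only [LY] at h
          generalize (4:ℕ)^n = m at h ht hs; omega
        · simp only [LY] at h
          have : LY n t = LY n s := by generalize (4:ℕ)^n = m at h ht hs; omega
          exact congrArg (fun z => some (true, z)) (LY_inj n this)

def IncIn {β : Type*} (L : β → ℕ) {k : ℕ} (e : Fin k → β) : Prop :=
  ∀ i j : Fin k, i < j → L (e i) < L (e j)

def DecIn {β : Type*} (M : β → ℕ) {k : ℕ} (e : Fin k → β) : Prop :=
  ∀ i j : Fin k, i < j → M (e j) < M (e i)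

lemma seq_map {β γ : Type*} (L M : β → ℕ) (L' M' : γ → ℕ) (φ : γ → β)
    (hL : ∀ a b : γ, L' a < L' b → L (φ a) < L (φ b))
    (hM : ∀ a b : γ, M' a < M' b → M (φ a) < M (φ b))
    {k : ℕ} (e : Fin k → γ) (h1 : IncIn L' e) (h2 : DecIn M' e) :
    IncIn L (φ ∘ e) ∧ DecIn M (φ ∘ e) :=
  ⟨fun i j hij => hL _ _ (h1 i j hij), fun i j hij => hM _ _ (h2 i j hij)⟩

lemma seq_prepend {β : Type*} (L M : β → ℕ) {l : ℕ} (f : Fin l → β) (b : β)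
    (h1 : IncIn L f) (h2 : DecIn M f)
    (hb1 : ∀ t, L b < L (f t)) (hb2 : ∀ t, M (f t) < M b) :
    IncIn L (Fin.cases b f : Fin (l+1) → β) ∧ DecIn M (Fin.cases b f : Fin (l+1) → β) := by
  constructor <;> intro i j hij <;>
  · induction j using Fin.cases with
    | zero => exact absurd hij (Fin.not_lt_zero i)
    | succ j =>
      induction i using Fin.cases with
      | zero =>
        first
        | simpa using hb1 j
        | simpa using hb2 j
      | succ i =>
        simp only [Fin.cases_succ]
        first
        | exact h1 i j (Fin.succ_lt_succ_iff.mp hij)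
        | exact h2 i j (Fin.succ_lt_succ_iff.mp hij)

lemma seq_append {β : Type*} (L M : β → ℕ) {k : ℕ} (e : Fin k → β) (a : β)
    (h1 : IncIn L e) (h2 : DecIn M e)
    (ha1 : ∀ t, L (e t) < L a) (ha2 : ∀ t, M a < M (e t)) :
    IncIn L (Fin.lastCases a e : Fin (k+1) → β) ∧ DecIn M (Fin.lastCases a e : Fin (k+1) → β) := by
  constructor <;> intro i j hij <;>
  · induction j using Fin.lastCases with
    | last =>
      induction i using Fin.lastCases with
      | last => exact absurd hij (lt_irrefl _)
      | cast i =>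
        first
        | simpa using ha1 i
        | simpa using ha2 i
    | cast j =>
      induction i using Fin.lastCases with
      | last => exact absurd hij (by simpa using lt_asymm (Fin.castSucc_lt_last j))
      | cast i =>
        simp only [Fin.lastCases_castSucc]
        first
        | exact h1 i j (Fin.castSucc_lt_castSucc_iff.mp hij)
        | exact h2 i j (Fin.castSucc_lt_castSucc_iff.mp hij)

lemma key : ∀ n, 1 ≤ n → ∀ L : T n → ℕ, Function.Injective L →
    (∀ a b : T n, LX n a < LX n b → LY n a < LY n b → L a < L b) →
    ∃ (k l : ℕ) (e : Fin k → T n) (f : Fin l → T n),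
      IncIn L e ∧ DecIn (LX n) e ∧ IncIn L f ∧ DecIn (LY n) f ∧ n + 1 ≤ k + l := by
  intro n hn
  induction n, hn using Nat.le_induction with
  | base =>
    intro L _ _
    refine ⟨1, 1, fun _ => (none : T 1), fun _ => (none : T 1), ?_, ?_, ?_, ?_, le_refl _⟩ <;>
      (intro i j hij; rw [Subsingleton.elim i j] at hij; exact absurd hij (lt_irrefl _))
  | succ n hn IH =>
    intro L hLinj hL
    have h4 : (1:ℕ) ≤ 4^n := Nat.one_le_pow _ _ (by norm_num)
    set embF : T n → T (n+1) := fun t => some (false, t) with hembF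
    set embT : T n → T (n+1) := fun t => some (true, t) with hembT
    have hLXF : ∀ t : T n, LX (n+1) (embF t) = 1 + LX n t := fun t => rfl
    have hLXT : ∀ t : T n, LX (n+1) (embT t) = 1 + 4^n + LX n t := fun t => rfl
    have hLYF : ∀ t : T n, LY (n+1) (embF t) = LY n t := fun t => rfl
    have hLYT : ∀ t : T n, LY (n+1) (embT t) = 4^n + LY n t := fun t => rfl
    have hLXnone : LX (n+1) (none : T (n+1)) = 0 := rfl
    have hLYnone : LY (n+1) (none : T (n+1)) = 2 * 4^n := rfl
    by_cases hc : ∀ t : T n, L (none : T (n+1)) < L (embT t)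
    · -- none is before the whole true copy in L; use the true copy
      have hTinj : Function.Injective (L ∘ embT) := by
        intro a b hab
        have h2 : (some (true, a) : Option (Bool × T n)) = some (true, b) := hLinj hab
        simpa using h2
      have hTord : ∀ a b : T n, LX n a < LX n b → LY n a < LY n b →
          (L ∘ embT) a < (L ∘ embT) b := by
        intro a b hx hy
        exact hL _ _ (by rw [hLXT, hLXT]; omega) (by rw [hLYT, hLYT]; omega)
      obtain ⟨k, l, e, f, he1, he2, hf1, hf2, hkl⟩ := IH (L ∘ embT) hTinj hTord
      have hE := seq_map L (LX (n+1)) (L ∘ embT) (LX n) embT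
        (fun a b h => h) (fun a b h => by rw [hLXT, hLXT]; omega) e he1 he2
      have hFmap := seq_map L (LY (n+1)) (L ∘ embT) (LY n) embT
        (fun a b h => h) (fun a b h => by rw [hLYT, hLYT]; omega) f hf1 hf2
      have hF := seq_prepend L (LY (n+1)) (embT ∘ f) (none : T (n+1)) hFmap.1 hFmap.2
        (fun t => hc (f t))
        (fun t => by rw [hLYnone, Function.comp_apply, hLYT]; have := LY_lt n (f t); omega)
      exact ⟨k, l + 1, embT ∘ e, _, hE.1, hE.2, hF.1, hF.2, by omega⟩
    · -- some true element is before none; then the whole false copy is before none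
      push_neg at hc
      obtain ⟨t0, ht0⟩ := hc
      have hall : ∀ s : T n, L (embF s) < L (none : T (n+1)) := by
        intro s
        refine lt_of_lt_of_le (hL (embF s) (embT t0) ?_ ?_) ht0
        · rw [hLXF, hLXT]; have := LX_lt n s; omega
        · rw [hLYF, hLYT]; have := LY_lt n s; omega
      have hFinj : Function.Injective (L ∘ embF) := by
        intro a b hab
        have h2 : (some (false, a) : Option (Bool × T n)) = some (false, b) := hLinj hab
        simpa using h2
      have hFord : ∀ a b : T n, LX n a < LX n b → LY n a < LY n b →
          (L ∘ embF) a < (L ∘ embF) b := by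
        intro a b hx hy
        exact hL _ _ (by rw [hLXF, hLXF]; omega) (by rw [hLYF, hLYF]; omega)
      obtain ⟨k, l, e, f, he1, he2, hf1, hf2, hkl⟩ := IH (L ∘ embF) hFinj hFord
      have hEmap := seq_map L (LX (n+1)) (L ∘ embF) (LX n) embF
        (fun a b h => h) (fun a b h => by rw [hLXF, hLXF]; omega) e he1 he2
      have hE := seq_append L (LX (n+1)) (embF ∘ e) (none : T (n+1)) hEmap.1 hEmap.2
        (fun t => hall (e t))
        (fun t => by rw [hLXnone, Function.comp_apply, hLXF]; omega)
      have hF := seq_map L (LY (n+1)) (L ∘ embF) (LY n) embF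
        (fun a b h => h) (fun a b h => by rw [hLYF, hLYF]; omega) f hf1 hf2
      exact ⟨k + 1, l, _, embF ∘ f, hE.1, hE.2, hF.1, hF.2, by omega⟩

def col : ∀ n, T n → ℕ
  | 0, t => t.elim
  | n+1, none => n
  | n+1, some (_, t) => col n t

lemma col_lt : ∀ n (t : T n), col n t < n
  | 0, t => t.elim
  | n+1, none => by simp [col]
  | n+1, some (b, t) => by
      have := col_lt n t
      simp only [col]; omega

lemma col_comp : ∀ n (a b : T n), col n a = col n b →
    (LX n a ≤ LX n b ∧ LY n a ≤ LY n b) ∨ (LX n b ≤ LX n a ∧ LY n b ≤ LY n a)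
  | 0, t, _, _ => t.elim
  | n+1, a, b, h => by
      rcases a with _ | ⟨ba, ta⟩ <;> rcases b with _ | ⟨bb, tb⟩
      · exact Or.inl ⟨le_refl _, le_refl _⟩
      · exfalso; have := col_lt n tb; simp only [col] at h; omega
      · exfalso; have := col_lt n ta; simp only [col] at h; omega
      · simp only [col] at h
        have hxa := LX_lt n ta
        have hxb := LX_lt n tb
        have hya := LY_lt n ta
        have hyb := LY_lt n tb
        rcases ba with _ | _ <;> rcases bb with _ | _
        · rcases col_comp n ta tb h with ⟨h1, h2⟩ | ⟨h1, h2⟩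
          · exact Or.inl ⟨by simp only [LX]; omega, by simp only [LY]; omega⟩
          · exact Or.inr ⟨by simp only [LX]; omega, by simp only [LY]; omega⟩
        · exact Or.inl ⟨by simp only [LX]; omega, by simp only [LY]; omega⟩
        · exact Or.inr ⟨by simp only [LX]; omega, by simp only [LY]; omega⟩
        · rcases col_comp n ta tb h with ⟨h1, h2⟩ | ⟨h1, h2⟩
          · exact Or.inl ⟨by simp only [LX]; omega, by simp only [LY]; omega⟩
          · exact Or.inr ⟨by simp only [LX]; omega, by simp only [LY]; omega⟩

lemma width_le (n : ℕ) (s : Finset (T n))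
    (hs : ∀ a ∈ s, ∀ b ∈ s, a ≠ b → ¬ (LX n a ≤ LX n b ∧ LY n a ≤ LY n b)) :
    s.card ≤ n := by
  have hinj : Set.InjOn (col n) s := by
    intro a ha b hb hab
    by_contra hne
    rcases col_comp n a b hab with h | h
    · exact hs a ha b hb hne h
    · exact hs b hb a ha (Ne.symm hne) h
  calc s.card = (s.image (col n)).card := (Finset.card_image_of_injOn hinj).symm
    _ ≤ (Finset.range n).card := Finset.card_le_card (by
        intro m hm
        simp only [Finset.mem_image] at hm
        obtain ⟨t, _, rfl⟩ := hm
        simpa using col_lt n t)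
    _ = n := Finset.card_range n

def A : ∀ n, Finset (T n)
  | 0 => ∅
  | n+1 => insert (none : T (n+1)) ((A n).image (fun t => (some (false, t) : T (n+1))))

lemma A_card : ∀ n, (A n).card = n
  | 0 => rfl
  | n+1 => by
      change (insert (none : Option (Bool × T n))
            ((A n).image (fun t => (some (false, t) : Option (Bool × T n))))).card = n + 1
      rw [Finset.card_insert_of_notMem (by simp)]
      rw [Finset.card_image_of_injective _ (fun a b h => by
          have h2 : (some (false, a) : Option (Bool × T n)) = some (false, b) := h
          simpa using h2)]
      rw [A_card n]

lemma A_anti : ∀ n, ∀ a ∈ A n, ∀ b ∈ A n, a ≠ b →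
    ¬ (LX n a ≤ LX n b ∧ LY n a ≤ LY n b)
  | 0 => by intro a ha; exact absurd ha (by simp [A])
  | n+1 => by
      intro a ha b hb hne
      rw [show A (n+1) = insert (none : T (n+1))
            ((A n).image (fun t => (some (false, t) : T (n+1)))) from rfl] at ha hb
      erw [Finset.mem_insert, Finset.mem_image] at ha hb
      rcases ha with rfl | ⟨ta, hta, rfl⟩ <;> rcases hb with rfl | ⟨tb, htb, rfl⟩
      · exact absurd rfl hne
      · rintro ⟨-, h2⟩
        have := LY_lt n tb
        simp only [LY] at h2
        omega
      · rintro ⟨h1, -⟩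
        simp only [LX] at h1
        omega
      · have htne : ta ≠ tb := fun h => hne (by rw [h])
        intro ⟨h1, h2⟩
        exact A_anti n ta hta tb htb htne ⟨by simpa [LX] using h1, by simpa [LY] using h2⟩

instance instTPO (n : ℕ) : PartialOrder (T n) :=
  PartialOrder.lift (fun t => (LX n t, LY n t)) (fun a b h => LX_inj n (congrArg Prod.fst h))

lemma T_le_iff (n : ℕ) (a b : T n) : a ≤ b ↔ LX n a ≤ LX n b ∧ LY n a ≤ LY n b := by
  show (LX n a, LY n a) ≤ (LX n b, LY n b) ↔ _
  exact Prod.mk_le_mk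

lemma T_lt_iff (n : ℕ) (a b : T n) : a < b ↔ LX n a < LX n b ∧ LY n a < LY n b := by
  show (LX n a, LY n a) < (LX n b, LY n b) ↔ _
  rw [Prod.lt_iff]
  constructor
  · rintro (⟨h1, h2⟩ | ⟨h1, h2⟩)
    · rcases h2.lt_or_eq with h | h
      · exact ⟨h1, h⟩
      · cases LY_inj n h; exact absurd h1 (lt_irrefl _)
    · rcases h1.lt_or_eq with h | h
      · exact ⟨h, h2⟩
      · cases LX_inj n h; exact absurd h2 (lt_irrefl _)
  · rintro ⟨h1, h2⟩
    exact Or.inl ⟨h1, h2.le⟩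

lemma bddSeq {α : Type} [Fintype α] (L M : α → ℕ) :
    BddAbove {k | ∃ e : Fin k → α,
      (∀ i j : Fin k, i < j → L (e i) < L (e j)) ∧
      (∀ i j : Fin k, i < j → M (e j) < M (e i))} := by
  refine ⟨Fintype.card α, fun k hk => ?_⟩
  obtain ⟨e, h1, -⟩ := hk
  have einj : Function.Injective e := by
    intro i j hij
    by_contra hne
    rcases lt_or_gt_of_ne hne with h | h
    · exact absurd (h1 i j h) (by rw [hij]; exact lt_irrefl _)
    · exact absurd (h1 j i h) (by rw [hij]; exact lt_irrefl _)
  simpa using Fintype.card_le_of_injective e einj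


/-- For each `u ≥ 1` there is a finite 2-dimensional poset of width `u` with a realizer
`(Lx, Ly)` such that for every linear extension `L`, the maximum lengths `d_x, d_y` of
sequences increasing in `L` and decreasing in `Lx` resp. `Ly` satisfy `d_x + d_y ≥ u + 1`. -/
theorem exists_reinforcement_poset :
    ∀ u : ℕ, 1 ≤ u →
      ∃ (α : Type) (_ : Fintype α) (_ : PartialOrder α) (Lx Ly : α → ℕ),
        IsRealizer Lx Ly ∧ posetWidth α = u ∧
        ∀ L : α → ℕ, IsLinearExtension L →
          u + 1 ≤ maxIncDec L Lx + maxIncDec L Ly := by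
  intro u hu
  refine ⟨T u, inferInstance, inferInstance, LX u, LY u,
    ⟨LX_inj u, LY_inj u, fun a b => T_lt_iff u a b⟩, ?_, ?_⟩
  · apply le_antisymm
    · refine csSup_le ⟨0, ∅, by simp [IsAntichain], rfl⟩ ?_
      rintro m ⟨s, hs, rfl⟩
      refine width_le u s ?_
      intro a ha b hb hab hle
      exact hs (Finset.mem_coe.mpr ha) (Finset.mem_coe.mpr hb) hab ((T_le_iff u a b).mpr hle)
    · refine le_csSup ⟨u, ?_⟩ ⟨A u, ?_, A_card u⟩
      · rintro m ⟨s, hs, rfl⟩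
        refine width_le u s ?_
        intro a ha b hb hab hle
        exact hs (Finset.mem_coe.mpr ha) (Finset.mem_coe.mpr hb) hab ((T_le_iff u a b).mpr hle)
      · intro a ha b hb hne hle
        exact A_anti u a (Finset.mem_coe.mp ha) b (Finset.mem_coe.mp hb) hne
          ((T_le_iff u a b).mp hle)
  · intro L hLext
    obtain ⟨k, l, e, f, he1, he2, hf1, hf2, hkl⟩ := key u hu L hLext.1
      (fun a b hx hy => hLext.2 a b ((T_lt_iff u a b).mpr ⟨hx, hy⟩))
    have hk : k ≤ maxIncDec L (LX u) := le_csSup (bddSeq L (LX u)) ⟨e, he1, he2⟩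
    have hl : l ≤ maxIncDec L (LY u) := le_csSup (bddSeq L (LY u)) ⟨f, hf1, hf2⟩
    omega
end

section
/- For every integer u ≥ 1, the 2-dimensional poset R_u of width u with realizer (L_x, L_y) satisfying: for every linear extension L of R_u, d_x + d_y ≥ u + 1 (where d_x and d_y are the maximum lengths of sequences increasing in L and decreasing in L_x, respectively L_y), can be chosen so that R_u has exactly (3/2)·2^u − 2 elements. -/
namespace RPAux

/-! ### Generic lemmas about `maxIncDec` -/

def IncDecSet {α : Type*} (L Lx : α → ℕ) : Set ℕ :=
  {k | ∃ e : Fin k → α,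
    (∀ i j : Fin k, i < j → L (e i) < L (e j)) ∧
    (∀ i j : Fin k, i < j → Lx (e j) < Lx (e i))}

lemma maxIncDec_def {α : Type*} (L Lx : α → ℕ) :
    maxIncDec L Lx = sSup (IncDecSet L Lx) := rfl

lemma zero_mem_IncDecSet {α : Type*} (L Lx : α → ℕ) : 0 ∈ IncDecSet L Lx :=
  ⟨fun i => i.elim0, fun i => i.elim0, fun i => i.elim0⟩

lemma IncDecSet_bddAbove {α : Type*} [Fintype α] (L Lx : α → ℕ) :
    BddAbove (IncDecSet L Lx) := by
  refine ⟨Fintype.card α, ?_⟩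
  rintro k ⟨e, h1, -⟩
  have he : Function.Injective e := by
    intro i j hij
    by_contra hne
    rcases lt_or_gt_of_ne hne with h | h
    · exact absurd (congrArg L hij) (h1 i j h).ne
    · exact absurd (congrArg L hij) (h1 j i h).ne'
  simpa using Fintype.card_le_of_injective e he

lemma le_maxIncDec {α : Type*} [Fintype α] {L Lx : α → ℕ} {k : ℕ}
    (h : k ∈ IncDecSet L Lx) : k ≤ maxIncDec L Lx :=
  le_csSup (IncDecSet_bddAbove L Lx) h

lemma maxIncDec_mem {α : Type*} [Fintype α] (L Lx : α → ℕ) :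
    maxIncDec L Lx ∈ IncDecSet L Lx :=
  Nat.sSup_mem ⟨0, zero_mem_IncDecSet L Lx⟩ (IncDecSet_bddAbove L Lx)

lemma maxIncDec_le_of_map {β α : Type*} [Fintype α] (f : β → α)
    {L' Lx' : β → ℕ} {L Lx : α → ℕ}
    (hL : ∀ a b : β, L' a < L' b → L (f a) < L (f b))
    (hLx : ∀ a b : β, Lx' a < Lx' b → Lx (f a) < Lx (f b)) :
    maxIncDec L' Lx' ≤ maxIncDec L Lx := by
  rw [maxIncDec_def]
  refine csSup_le ⟨0, zero_mem_IncDecSet L' Lx'⟩ ?_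
  rintro k ⟨e, h1, h2⟩
  exact le_maxIncDec
    ⟨f ∘ e, fun i j hij => hL _ _ (h1 i j hij), fun i j hij => hLx _ _ (h2 i j hij)⟩

lemma cons_mem_IncDecSet {α : Type*} {L Lx : α → ℕ} {m : ℕ} {e : Fin m → α} {q : α}
    (h1 : ∀ i j : Fin m, i < j → L (e i) < L (e j))
    (h2 : ∀ i j : Fin m, i < j → Lx (e j) < Lx (e i))
    (hq1 : ∀ i, L q < L (e i)) (hq2 : ∀ i, Lx (e i) < Lx q) :
    (m + 1) ∈ IncDecSet L Lx := by
  refine ⟨Fin.cons q e, ?_, ?_⟩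
  · intro i j hij
    rcases Fin.eq_zero_or_eq_succ j with rfl | ⟨j', rfl⟩
    · exact absurd hij (Fin.not_lt_zero i)
    rcases Fin.eq_zero_or_eq_succ i with rfl | ⟨i', rfl⟩
    · simpa using hq1 j'
    · have hij' : i' < j' := by rwa [Fin.succ_lt_succ_iff] at hij
      simpa using h1 i' j' hij'
  · intro i j hij
    rcases Fin.eq_zero_or_eq_succ j with rfl | ⟨j', rfl⟩
    · exact absurd hij (Fin.not_lt_zero i)
    rcases Fin.eq_zero_or_eq_succ i with rfl | ⟨i', rfl⟩
    · simpa using hq2 j'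
    · have hij' : i' < j' := by rwa [Fin.succ_lt_succ_iff] at hij
      simpa using h2 i' j' hij'

lemma snoc_mem_IncDecSet {α : Type*} {L Lx : α → ℕ} {m : ℕ} {e : Fin m → α} {q : α}
    (h1 : ∀ i j : Fin m, i < j → L (e i) < L (e j))
    (h2 : ∀ i j : Fin m, i < j → Lx (e j) < Lx (e i))
    (hq1 : ∀ i, L (e i) < L q) (hq2 : ∀ i, Lx q < Lx (e i)) :
    (m + 1) ∈ IncDecSet L Lx := by
  refine ⟨Fin.snoc e q, ?_, ?_⟩
  · intro i j hij
    rcases Fin.eq_castSucc_or_eq_last i with ⟨i', rfl⟩ | rfl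
    · rcases Fin.eq_castSucc_or_eq_last j with ⟨j', rfl⟩ | rfl
      · have hij' : i' < j' := by rwa [Fin.castSucc_lt_castSucc_iff] at hij
        simpa using h1 i' j' hij'
      · simpa using hq1 i'
    · exact absurd hij (by simpa using Fin.le_last j)
  · intro i j hij
    rcases Fin.eq_castSucc_or_eq_last i with ⟨i', rfl⟩ | rfl
    · rcases Fin.eq_castSucc_or_eq_last j with ⟨j', rfl⟩ | rfl
      · have hij' : i' < j' := by rwa [Fin.castSucc_lt_castSucc_iff] at hij
        simpa using h2 i' j' hij'
      · simpa using hq2 i'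
    · exact absurd hij (by simpa using Fin.le_last j)

/-! ### The point order coming from two coordinate functions -/

def ptOrder {α : Type} (x y : α → ℕ) : PartialOrder α where
  le a b := a = b ∨ (x a < x b ∧ y a < y b)
  lt a b := x a < x b ∧ y a < y b
  le_refl a := Or.inl rfl
  le_trans a b c hab hbc := by
    rcases hab with rfl | h1
    · exact hbc
    rcases hbc with rfl | h2
    · exact Or.inr h1
    · exact Or.inr ⟨h1.1.trans h2.1, h1.2.trans h2.2⟩
  le_antisymm a b hab hba := by
    rcases hab with rfl | h1
    · rfl
    rcases hba with rfl | h2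
    · rfl
    · exact absurd (h1.1.trans h2.1) (lt_irrefl _)
  lt_iff_le_not_ge a b := by
    constructor
    · intro h
      refine ⟨Or.inr h, ?_⟩
      rintro (rfl | h2)
      · exact lt_irrefl _ h.1
      · exact absurd (h.1.trans h2.1) (lt_irrefl _)
    · rintro ⟨(rfl | h1), h2⟩
      · exact absurd (Or.inl rfl) h2
      · exact h1

/-! ### The recursive construction -/

def R : ℕ → Type
  | 0 => PUnit
  | k + 1 => R k ⊕ R k ⊕ PUnit

def instFR : (k : ℕ) → Fintype (R k)
  | 0 => inferInstanceAs (Fintype PUnit)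
  | k + 1 => letI := instFR k; inferInstanceAs (Fintype (R k ⊕ R k ⊕ PUnit))

attribute [instance] instFR

/-- `S k = 2^(k+1) - 1`, the number of elements of `R k`. -/
def S (k : ℕ) : ℕ := 2 ^ (k + 1) - 1

lemma one_le_S (k : ℕ) : 1 ≤ S k := by
  have : (1:ℕ) ≤ 2 ^ (k+1) := Nat.one_le_two_pow
  unfold S; omega

lemma S_succ (k : ℕ) : S (k + 1) = 2 * S k + 1 := by
  have h1 : (1:ℕ) ≤ 2 ^ (k+1) := Nat.one_le_two_pow
  unfold S
  rw [pow_succ]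
  omega

lemma card_R : ∀ k, Fintype.card (R k) = S k
  | 0 => rfl
  | k + 1 => by
    have ih := card_R k
    show Fintype.card (R k ⊕ R k ⊕ PUnit) = S (k+1)
    rw [Fintype.card_sum, Fintype.card_sum, ih, S_succ]
    simp; omega

def rx : (k : ℕ) → R k → ℕ
  | 0, _ => 0
  | k + 1, Sum.inl a => rx k a
  | k + 1, Sum.inr (Sum.inl b) => S k + rx k b
  | k + 1, Sum.inr (Sum.inr _) => 2 * S k

def ry : (k : ℕ) → R k → ℕ
  | 0, _ => 0
  | k + 1, Sum.inl a => 1 + ry k a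
  | k + 1, Sum.inr (Sum.inl b) => 1 + S k + ry k b
  | k + 1, Sum.inr (Sum.inr _) => 0

lemma rx_lt : ∀ k (a : R k), rx k a < S k
  | 0, _ => by simp [rx, S]
  | k + 1, Sum.inl a => by
    have := rx_lt k a; have := one_le_S k
    simp only [rx, S_succ]; omega
  | k + 1, Sum.inr (Sum.inl b) => by
    have := rx_lt k b
    simp only [rx, S_succ]; omega
  | k + 1, Sum.inr (Sum.inr _) => by
    have := one_le_S k
    simp only [rx, S_succ]; omega

lemma ry_lt : ∀ k (a : R k), ry k a < S k
  | 0, _ => by simp [ry, S]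
  | k + 1, Sum.inl a => by
    have := ry_lt k a; have := one_le_S k
    simp only [ry, S_succ]; omega
  | k + 1, Sum.inr (Sum.inl b) => by
    have := ry_lt k b
    simp only [ry, S_succ]; omega
  | k + 1, Sum.inr (Sum.inr _) => by
    have := one_le_S k
    simp only [ry, S_succ]; omega

lemma rx_inj : ∀ k, Function.Injective (rx k)
  | 0 => fun a b _ => by cases a; cases b; rfl
  | k + 1 => by
    rintro (a | b | q) (a' | b' | q') h
    · exact congrArg Sum.inl (rx_inj k (by simpa [rx] using h))
    · exact absurd h (by have := rx_lt k a; simp only [rx]; omega)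
    · exact absurd h (by have := rx_lt k a; have := one_le_S k; simp only [rx]; omega)
    · exact absurd h (by have := rx_lt k a'; simp only [rx]; omega)
    · exact congrArg (fun z => Sum.inr (Sum.inl z))
        (rx_inj k (show rx k b = rx k b' by simp only [rx] at h; omega))
    · exact absurd h (by have := rx_lt k b; simp only [rx]; omega)
    · exact absurd h (by have := rx_lt k a'; have := one_le_S k; simp only [rx]; omega)
    · exact absurd h (by have := rx_lt k b'; simp only [rx]; omega)
    · cases q; cases q'; rfl

lemma ry_inj : ∀ k, Function.Injective (ry k)
  | 0 => fun a b _ => by cases a; cases b; rfl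
  | k + 1 => by
    rintro (a | b | q) (a' | b' | q') h
    · exact congrArg Sum.inl (ry_inj k (show ry k a = ry k a' by simp only [ry] at h; omega))
    · exact absurd h (by have := ry_lt k a; simp only [ry]; omega)
    · exact absurd h (by simp only [ry]; omega)
    · exact absurd h (by have := ry_lt k a'; simp only [ry]; omega)
    · exact congrArg (fun z => Sum.inr (Sum.inl z))
        (ry_inj k (show ry k b = ry k b' by simp only [ry] at h; omega))
    · exact absurd h (by simp only [ry]; omega)
    · exact absurd h (by simp only [ry]; omega)
    · exact absurd h (by simp only [ry]; omega)
    · cases q; cases q'; rfl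

/-! ### The main inequality -/

lemma main_ineq : ∀ (k : ℕ) (L : R k → ℕ), Function.Injective L →
    (∀ a b : R k, rx k a < rx k b ∧ ry k a < ry k b → L a < L b) →
    k + 2 ≤ maxIncDec L (rx k) + maxIncDec L (ry k) := by
  intro k
  induction k with
  | zero =>
    intro L _ _
    have h1 : 1 ∈ IncDecSet L (rx 0) :=
      ⟨fun _ => PUnit.unit, fun i j hij => absurd hij (by omega),
        fun i j hij => absurd hij (by omega)⟩
    have h2 : 1 ∈ IncDecSet L (ry 0) :=
      ⟨fun _ => PUnit.unit, fun i j hij => absurd hij (by omega),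
        fun i j hij => absurd hij (by omega)⟩
    have := le_maxIncDec h1
    have := le_maxIncDec h2
    omega
  | succ k ih =>
    intro L hLinj hLmono
    set Q : R (k+1) := Sum.inr (Sum.inr PUnit.unit) with hQ
    -- the two embeddings
    set fA : R k → R (k+1) := Sum.inl with hfA
    set fB : R k → R (k+1) := fun b => Sum.inr (Sum.inl b) with hfB
    have hmonoA : ∀ a b : R k, rx k a < rx k b ∧ ry k a < ry k b → L (fA a) < L (fA b) := by
      intro a b h
      exact hLmono _ _ (by simp only [hfA, rx, ry]; omega)
    have hmonoB : ∀ a b : R k, rx k a < rx k b ∧ ry k a < ry k b → L (fB a) < L (fB b) := by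
      intro a b h
      exact hLmono _ _ (by simp only [hfB, rx, ry]; omega)
    have hinjA : Function.Injective (L ∘ fA) := by
      intro a b h
      exact Sum.inl_injective (hLinj h)
    have hinjB : Function.Injective (L ∘ fB) := by
      intro a b h
      have := hLinj h
      simp only [hfB] at this
      exact Sum.inl_injective (Sum.inr_injective this)
    -- A < B elementwise
    have hAB : ∀ a b : R k, L (fA a) < L (fB b) := by
      intro a b
      refine hLmono _ _ ?_
      have := rx_lt k a; have := ry_lt k a
      simp only [hfA, hfB, rx, ry]; omega
    by_cases hQB : ∀ b : R k, L Q < L (fB b)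
    · -- Q is before all of B : prepend Q to the x-decreasing sequence of B
      have ihB := ih (L ∘ fB) hinjB hmonoB
      obtain ⟨e, he1, he2⟩ := maxIncDec_mem (L ∘ fB) (rx k)
      have hx : (maxIncDec (L ∘ fB) (rx k) + 1) ∈ IncDecSet L (rx (k+1)) := by
        refine cons_mem_IncDecSet (e := fB ∘ e) (q := Q) ?_ ?_ ?_ ?_
        · exact fun i j hij => he1 i j hij
        · intro i j hij
          have := he2 i j hij
          simp only [Function.comp, hfB, rx]; omega
        · exact fun i => hQB (e i)
        · intro i
          have := rx_lt k (e i)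
          simp only [Function.comp, hfB, hQ, rx]; omega
      have hy : maxIncDec (L ∘ fB) (ry k) ≤ maxIncDec L (ry (k+1)) := by
        refine maxIncDec_le_of_map fB (fun a b h => h) ?_
        intro a b h
        simp only [hfB, ry]; omega
      have := le_maxIncDec hx
      omega
    · -- some element of B is before Q, hence all of A is before Q :
      -- append Q to the y-decreasing sequence of A
      push_neg at hQB
      obtain ⟨b0, hb0⟩ := hQB
      have hb0' : L (fB b0) < L Q := by
        rcases lt_or_eq_of_le hb0 with h | h
        · exact h
        · exact absurd (hLinj h) (by intro hc; injection hc with hc2; injection hc2)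
      have hAQ : ∀ a : R k, L (fA a) < L Q := fun a => (hAB a b0).trans hb0'
      have ihA := ih (L ∘ fA) hinjA hmonoA
      obtain ⟨e, he1, he2⟩ := maxIncDec_mem (L ∘ fA) (ry k)
      have hy : (maxIncDec (L ∘ fA) (ry k) + 1) ∈ IncDecSet L (ry (k+1)) := by
        refine snoc_mem_IncDecSet (e := fA ∘ e) (q := Q) ?_ ?_ ?_ ?_
        · exact fun i j hij => he1 i j hij
        · intro i j hij
          have := he2 i j hij
          simp only [Function.comp, hfA, ry]; omega
        · exact fun i => hAQ (e i)
        · intro i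
          simp only [Function.comp, hfA, hQ, ry]; omega
      have hx : maxIncDec (L ∘ fA) (rx k) ≤ maxIncDec L (rx (k+1)) := by
        refine maxIncDec_le_of_map fA (fun a b h => h) ?_
        intro a b h
        simp only [hfA, rx]; omega
      have := le_maxIncDec hy
      omega

/-! ### Antichain of size k+1 -/

def ac : (k : ℕ) → Fin (k + 1) → R k
  | 0, _ => PUnit.unit
  | k + 1, i =>
    if h : (i : ℕ) < k + 1 then Sum.inl (ac k ⟨i, h⟩) else Sum.inr (Sum.inr PUnit.unit)

lemma ac_pattern : ∀ k (i j : Fin (k + 1)), i < j →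
    rx k (ac k i) < rx k (ac k j) ∧ ry k (ac k j) < ry k (ac k i)
  | 0, i, j, hij => absurd hij (by omega)
  | k + 1, i, j, hij => by
    have hj' : (j : ℕ) < k + 2 := j.isLt
    by_cases hj : (j : ℕ) < k + 1
    · have hi : (i : ℕ) < k + 1 := lt_trans hij hj
      have ih := ac_pattern k ⟨i, hi⟩ ⟨j, hj⟩ (by simpa using hij)
      simp only [ac, hi, hj, ↓reduceDIte, rx, ry]
      omega
    · -- j is the last index, ac j = Q
      have hi : (i : ℕ) < k + 1 := by omega
      have h1 := rx_lt k (ac k ⟨i, hi⟩)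
      have h2 := ry_lt k (ac k ⟨i, hi⟩)
      have := one_le_S k
      simp only [ac, hi, hj, ↓reduceDIte, rx, ry]
      omega

/-! ### Chain cover by k+1 chains -/

def cc : (k : ℕ) → R k → Fin (k + 1)
  | 0, _ => 0
  | k + 1, Sum.inl a => (cc k a).castSucc
  | k + 1, Sum.inr (Sum.inl b) => (cc k b).castSucc
  | k + 1, Sum.inr (Sum.inr _) => Fin.last (k + 1)

lemma cc_fiber : ∀ k (a b : R k), cc k a = cc k b →
    a = b ∨ (rx k a < rx k b ∧ ry k a < ry k b) ∨ (rx k b < rx k a ∧ ry k b < ry k a)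
  | 0, a, b, _ => by cases a; cases b; exact Or.inl rfl
  | k + 1, a, b, h => by
    have hS := one_le_S k
    rcases a with a | a | a <;> rcases b with b | b | b
    · rcases cc_fiber k a b (by simpa [cc, Fin.castSucc_inj] using h) with rfl | h | h
      · exact Or.inl rfl
      · exact Or.inr (Or.inl (by simp only [rx, ry]; omega))
      · exact Or.inr (Or.inr (by simp only [rx, ry]; omega))
    · refine Or.inr (Or.inl ?_)
      have := rx_lt k a; have := ry_lt k a
      simp only [rx, ry]; omega
    · exact absurd h (by simp [cc])
    · refine Or.inr (Or.inr ?_)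
      have := rx_lt k b; have := ry_lt k b
      simp only [rx, ry]; omega
    · rcases cc_fiber k a b (by simpa [cc, Fin.castSucc_inj] using h) with rfl | h | h
      · exact Or.inl rfl
      · exact Or.inr (Or.inl (by simp only [rx, ry]; omega))
      · exact Or.inr (Or.inr (by simp only [rx, ry]; omega))
    · exact absurd h (by simp [cc])
    · exact absurd h.symm (by simp [cc])
    · exact absurd h.symm (by simp [cc])
    · cases a; cases b; exact Or.inl rfl

/-! ### The padded poset -/

/-- `Pad k = R k` together with a chain of `2^k - 1` extra elements on top. -/
def Pad (k : ℕ) : Type := R k ⊕ Fin (2 ^ k - 1)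

instance (k : ℕ) : Fintype (Pad k) := inferInstanceAs (Fintype (R k ⊕ Fin (2 ^ k - 1)))

def px (k : ℕ) : Pad k → ℕ
  | Sum.inl a => rx k a
  | Sum.inr i => S k + i

def py (k : ℕ) : Pad k → ℕ
  | Sum.inl a => ry k a
  | Sum.inr i => S k + i

lemma px_inj (k : ℕ) : Function.Injective (px k) := by
  rintro (a | i) (b | j) h
  · exact congrArg Sum.inl (rx_inj k (by simpa [px] using h))
  · exact absurd h (by have := rx_lt k a; simp only [px]; omega)
  · exact absurd h (by have := rx_lt k b; simp only [px]; omega)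
  · simp only [px, Nat.add_left_cancel_iff] at h
    exact congrArg Sum.inr (Fin.val_injective (by exact_mod_cast h))

lemma py_inj (k : ℕ) : Function.Injective (py k) := by
  rintro (a | i) (b | j) h
  · exact congrArg Sum.inl (ry_inj k (by simpa [py] using h))
  · exact absurd h (by have := ry_lt k a; simp only [py]; omega)
  · exact absurd h (by have := ry_lt k b; simp only [py]; omega)
  · simp only [py, Nat.add_left_cancel_iff] at h
    exact congrArg Sum.inr (Fin.val_injective (by exact_mod_cast h))

def ccPad (k : ℕ) : Pad k → Fin (k + 1)
  | Sum.inl a => cc k a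
  | Sum.inr _ => 0

lemma ccPad_fiber (k : ℕ) (a b : Pad k) (h : ccPad k a = ccPad k b) :
    a = b ∨ (px k a < px k b ∧ py k a < py k b) ∨ (px k b < px k a ∧ py k b < py k a) := by
  rcases a with a | i <;> rcases b with b | j
  · rcases cc_fiber k a b (by simpa [ccPad] using h) with rfl | h | h
    · exact Or.inl rfl
    · exact Or.inr (Or.inl (by simpa [px, py] using h))
    · exact Or.inr (Or.inr (by simpa [px, py] using h))
  · refine Or.inr (Or.inl ?_)
    have := rx_lt k a; have := ry_lt k a
    simp only [px, py]; omega
  · refine Or.inr (Or.inr ?_)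
    have := rx_lt k b; have := ry_lt k b
    simp only [px, py]; omega
  · rcases lt_trichotomy (i : ℕ) (j : ℕ) with hij | hij | hij
    · exact Or.inr (Or.inl (by simp only [px, py]; omega))
    · exact Or.inl (congrArg Sum.inr (Fin.val_injective (by exact_mod_cast hij)))
    · exact Or.inr (Or.inr (by simp only [px, py]; omega))

end RPAux

open RPAux in
/-- The reinforcement poset `R_u` of width `u` (with realizer `(Lx, Ly)` such that
`d_x + d_y ≥ u + 1` for every linear extension) can be chosen with exactly
`(3/2)·2^u − 2 = 3·2^(u−1) − 2` elements. -/
theorem exists_reinforcement_poset_card :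
    ∀ u : ℕ, 1 ≤ u →
      ∃ (α : Type) (_ : Fintype α) (_ : PartialOrder α) (Lx Ly : α → ℕ),
        IsRealizer Lx Ly ∧ posetWidth α = u ∧
        Fintype.card α = 3 * 2 ^ (u - 1) - 2 ∧
        ∀ L : α → ℕ, IsLinearExtension L →
          u + 1 ≤ maxIncDec L Lx + maxIncDec L Ly := by
  intro u hu
  obtain ⟨k, rfl⟩ : ∃ k, u = k + 1 := ⟨u - 1, (Nat.succ_pred_eq_of_pos hu).symm⟩
  clear hu
  refine ⟨Pad k, inferInstance, ptOrder (px k) (py k), px k, py k, ?_, ?_, ?_, ?_⟩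
  · -- realizer
    exact ⟨px_inj k, py_inj k, fun a b => Iff.rfl⟩
  · -- width
    letI := ptOrder (px k) (py k)
    classical
    apply le_antisymm
    · refine csSup_le ⟨0, ⟨∅, by simp [IsAntichain], rfl⟩⟩ ?_
      rintro n ⟨s, hanti, rfl⟩
      have hinj : Set.InjOn (ccPad k) s := by
        intro a ha b hb hab
        rcases ccPad_fiber k a b hab with rfl | h | h
        · rfl
        · by_contra hne
          exact hanti ha hb hne (Or.inr h)
        · by_contra hne
          exact hanti hb ha (Ne.symm hne) (Or.inr h)
      calc s.card = (s.image (ccPad k)).card := (Finset.card_image_of_injOn hinj).symm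
        _ ≤ (Finset.univ : Finset (Fin (k+1))).card := Finset.card_le_card (Finset.subset_univ _)
        _ = k + 1 := by simp
    · -- there is an antichain of size k+1
      have hpat := ac_pattern k
      set g : Fin (k+1) → Pad k := fun i => Sum.inl (ac k i) with hg
      have hginj : Function.Injective g := by
        intro i j hij
        by_contra hne
        rcases lt_or_gt_of_ne hne with h | h
        · have := (hpat i j h).1
          rw [show ac k i = ac k j from Sum.inl_injective hij] at this
          omega
        · have := (hpat j i h).1
          rw [show ac k i = ac k j from Sum.inl_injective hij] at this
          omega
      refine le_csSup ?_ ⟨Finset.univ.image g, ?_, ?_⟩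
      · -- bddAbove
        refine ⟨Fintype.card (Pad k), ?_⟩
        rintro n ⟨s, -, rfl⟩
        exact Finset.card_le_univ s
      · -- antichain
        intro a ha b hb hne hle
        simp only [Finset.coe_image, Set.mem_image] at ha hb
        obtain ⟨i, -, rfl⟩ := ha
        obtain ⟨j, -, rfl⟩ := hb
        rcases hle with h | h
        · exact hne h
        · have hij : i ≠ j := fun hij => hne (by rw [hij])
          simp only [hg, px, py] at h
          rcases lt_or_gt_of_ne hij with hlt | hlt
          · have := (hpat i j hlt).2; omega
          · have := (hpat j i hlt).1; omega
      · rw [Finset.card_image_of_injective _ hginj]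
        simp
  · -- cardinality
    have h1 : Fintype.card (Pad k) = S k + (2 ^ k - 1) := by
      show Fintype.card (R k ⊕ Fin (2 ^ k - 1)) = _
      rw [Fintype.card_sum, card_R, Fintype.card_fin]
    have h2 : (1:ℕ) ≤ 2 ^ k := Nat.one_le_two_pow
    have h3 : S k = 2 ^ (k+1) - 1 := rfl
    rw [h1, h3]
    simp only [Nat.add_sub_cancel]
    rw [pow_succ]
    ring_nf
    omega
  · -- the main inequality
    intro L hL
    obtain ⟨hLinj, hLmono⟩ := hL
    have hmono : ∀ a b : R k, rx k a < rx k b ∧ ry k a < ry k b →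
        L (Sum.inl a) < L (Sum.inl b) := by
      intro a b h
      exact hLmono _ _ (show px k (Sum.inl a) < px k (Sum.inl b) ∧
        py k (Sum.inl a) < py k (Sum.inl b) from h)
    have hinj : Function.Injective (L ∘ Sum.inl : R k → ℕ) := by
      intro a b h
      exact Sum.inl_injective (hLinj h)
    have h := main_ineq k (L ∘ Sum.inl) hinj hmono
    have hx : maxIncDec (L ∘ Sum.inl) (rx k) ≤ maxIncDec L (px k) :=
      maxIncDec_le_of_map Sum.inl (fun a b h => h) (fun a b h => h)
    have hy : maxIncDec (L ∘ Sum.inl) (ry k) ≤ maxIncDec L (py k) :=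
      maxIncDec_le_of_map Sum.inl (fun a b h => h) (fun a b h => h)
    omega
end

section
/- For every finite poset P of width w ≥ 1 there exists a finite poset P' of width w + 1 such that qn(P') ≥ qn(P) + 1. -/
set_option linter.unusedSectionVars false


/-! ### Auxiliary lemmas -/

section Aux

variable {γ : Type*} [PartialOrder γ]

lemma hasRainbow_mono {L : γ → ℕ} {k m : ℕ} (h : HasRainbow L m) (hk : k ≤ m) :
    HasRainbow L k := by
  obtain ⟨e, h1, h2, h3⟩ := h
  exact ⟨fun i => e (Fin.castLE hk i), fun i => h1 _, fun i => h2 _,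
    fun i j hij => h3 _ _ (by rw [Fin.lt_def] at hij ⊢; simpa using hij)⟩

lemma hasRainbow_card_le [Fintype γ] {L : γ → ℕ} {k : ℕ} (h : HasRainbow L k) :
    k ≤ Fintype.card γ := by
  obtain ⟨e, -, -, h3⟩ := h
  have hinj : Function.Injective (fun i : Fin k => (e i).1) := by
    intro i j hij
    by_contra hne
    rcases Ne.lt_or_gt hne with hlt | hlt
    · exact absurd (congrArg L hij) (Nat.ne_of_lt ((h3 _ _ hlt).1))
    · exact absurd (congrArg L hij).symm (Nat.ne_of_lt ((h3 _ _ hlt).1))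
  simpa using Fintype.card_le_of_injective _ hinj

lemma exists_isLinearExtension (γ : Type*) [Fintype γ] [PartialOrder γ] :
    ∃ L : γ → ℕ, IsLinearExtension L := by
  classical
  let f : γ → LinearExtension γ := toLinearExtension
  have hf : ∀ a b : γ, a < b → f a < f b := by
    intro a b hab
    exact lt_of_le_of_ne (toLinearExtension.monotone hab.le) fun h => hab.ne h
  have hrank : ∀ a b : γ, f a < f b →
      (Finset.univ.filter (fun x : γ => f x < f a)).card <
      (Finset.univ.filter (fun x : γ => f x < f b)).card := by
    intro a b hab
    apply Finset.card_lt_card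
    rw [Finset.ssubset_def]
    constructor
    · intro x hx
      simp only [Finset.mem_filter, Finset.mem_univ, true_and] at hx ⊢
      exact hx.trans hab
    · intro hsub
      have := hsub (Finset.mem_filter.mpr ⟨Finset.mem_univ a, hab⟩)
      simp only [Finset.mem_filter, Finset.mem_univ, true_and] at this
      exact absurd this (lt_irrefl _)
  refine ⟨fun a => (Finset.univ.filter (fun x : γ => f x < f a)).card, ?_,
    fun a b hab => hrank a b (hf a b hab)⟩
  intro a b hab
  by_contra hne
  have hfne : f a ≠ f b := fun h => hne h
  rcases hfne.lt_or_gt with h | h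
  · exact absurd hab (Nat.ne_of_lt (hrank _ _ h))
  · exact absurd hab.symm (Nat.ne_of_lt (hrank _ _ h))

end Aux

/-! ### The lifting construction -/

section Construction

variable (α : Type*) [Fintype α] [PartialOrder α]

/-- A `Type 0` copy of `α`. -/
def QC : Type := Fin (Fintype.card α)

noncomputable instance : PartialOrder (QC α) :=
  PartialOrder.lift (fun x : QC α => (Fintype.equivFin α).symm x)
    (Equiv.injective _)

instance : Fintype (QC α) := by unfold QC; infer_instance

lemma qc_lt_iff {p q : QC α} :
    p < q ↔ (Fintype.equivFin α).symm p < (Fintype.equivFin α).symm q := Iff.rfl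

lemma qc_le_iff {p q : QC α} :
    p ≤ q ↔ (Fintype.equivFin α).symm p ≤ (Fintype.equivFin α).symm q := Iff.rfl

/-- The middle layer: two stacked copies of `α`, together with one element
incomparable to all of them. -/
abbrev MidL : Type := ((QC α) ⊕ₗ (QC α)) ⊕ Unit

/-- The lifted poset. -/
abbrev BB : Type := WithBot (WithTop (MidL α))

instance : Fintype (WithTop (MidL α)) := inferInstanceAs (Fintype (Option (MidL α)))
instance : Fintype (BB α) := inferInstanceAs (Fintype (Option (Option (MidL α))))

/-- bottom element -/
def sB : BB α := ⊥
/-- top element -/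
def tB : BB α := ((⊤ : WithTop (MidL α)) : BB α)
/-- the extra incomparable element -/
def cB : BB α := (((Sum.inr () : MidL α) : WithTop (MidL α)) : BB α)
/-- embedding of the lower copy -/
noncomputable def lowE (a : α) : BB α :=
  (((Sum.inl (toLex (Sum.inl ((Fintype.equivFin α) a))) : MidL α) : WithTop (MidL α)) : BB α)
/-- embedding of the upper copy -/
noncomputable def highE (a : α) : BB α :=
  (((Sum.inl (toLex (Sum.inr ((Fintype.equivFin α) a))) : MidL α) : WithTop (MidL α)) : BB α)

variable {α}

lemma lowE_lt_lowE {a b : α} : lowE α a < lowE α b ↔ a < b := by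
  simp only [lowE, WithBot.coe_lt_coe, WithTop.coe_lt_coe, Sum.inl_lt_inl_iff,
    Sum.Lex.inl_lt_inl_iff, qc_lt_iff, Equiv.symm_apply_apply]
  exact (Sum.Lex.inl_lt_inl_iff (α := QC α) (β := QC α)).trans
    ((qc_lt_iff _).trans (by simp only [Equiv.symm_apply_apply]))

lemma lowE_le_lowE {a b : α} : lowE α a ≤ lowE α b ↔ a ≤ b := by
  simp only [lowE, WithBot.coe_le_coe, WithTop.coe_le_coe, Sum.inl_le_inl_iff,
    Sum.Lex.inl_le_inl_iff, qc_le_iff, Equiv.symm_apply_apply]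
  exact (Sum.Lex.inl_le_inl_iff (α := QC α) (β := QC α)).trans
    ((qc_le_iff _).trans (by simp only [Equiv.symm_apply_apply]))

lemma highE_lt_highE {a b : α} : highE α a < highE α b ↔ a < b := by
  simp only [highE, WithBot.coe_lt_coe, WithTop.coe_lt_coe, Sum.inl_lt_inl_iff,
    Sum.Lex.inr_lt_inr_iff, qc_lt_iff, Equiv.symm_apply_apply]
  exact (Sum.Lex.inr_lt_inr_iff (α := QC α) (β := QC α)).trans
    ((qc_lt_iff _).trans (by simp only [Equiv.symm_apply_apply]))

lemma lowE_lt_highE (a b : α) : lowE α a < highE α b := by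
  simp only [lowE, highE, WithBot.coe_lt_coe, WithTop.coe_lt_coe, Sum.inl_lt_inl_iff]
  exact Sum.Lex.inl_lt_inr _ _

lemma bot_lt_lowE (a : α) : sB α < lowE α a := WithBot.bot_lt_coe _

lemma bot_lt_cB : sB α < cB α := WithBot.bot_lt_coe _

lemma highE_lt_top (a : α) : highE α a < tB α := by
  simp only [highE, tB, WithBot.coe_lt_coe]
  exact WithTop.coe_lt_top _

lemma cB_lt_top : cB α < tB α := by
  simp only [cB, tB, WithBot.coe_lt_coe]
  exact WithTop.coe_lt_top _

lemma cB_ne_lowE (a : α) : cB α ≠ lowE α a := by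
  simp [cB, lowE]

lemma cB_ne_highE (a : α) : cB α ≠ highE α a := by
  simp [cB, highE]

lemma not_cB_le_lowE (a : α) : ¬ cB α ≤ lowE α a := by
  simp only [cB, lowE, WithBot.coe_le_coe, WithTop.coe_le_coe]
  exact Sum.not_inr_le_inl

lemma not_lowE_le_cB (a : α) : ¬ lowE α a ≤ cB α := by
  simp only [cB, lowE, WithBot.coe_le_coe, WithTop.coe_le_coe]
  exact Sum.not_inl_le_inr

lemma lowE_injective : Function.Injective (lowE α) := by
  intro a b h
  exact le_antisymm (lowE_le_lowE.mp h.le) (lowE_le_lowE.mp h.ge)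

/-- `⊥ ⋖ c` in the lifted poset. -/
lemma covBy_bot_cB : sB α ⋖ cB α := by
  refine ⟨bot_lt_cB, ?_⟩
  intro z h1 h2
  induction z using WithBot.recBotCoe with
  | bot => exact absurd h1 (lt_irrefl _)
  | coe w =>
    induction w using WithTop.recTopCoe with
    | top =>
      rw [cB, WithBot.coe_lt_coe] at h2
      exact absurd h2 (not_top_lt)
    | coe m =>
      rw [cB, WithBot.coe_lt_coe, WithTop.coe_lt_coe] at h2
      rcases m with ml | u
      · exact Sum.not_inl_lt_inr h2
      · exact absurd h2 (lt_irrefl _)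

/-- `c ⋖ ⊤` in the lifted poset. -/
lemma covBy_cB_top : cB α ⋖ tB α := by
  refine ⟨cB_lt_top, ?_⟩
  intro z h1 h2
  induction z using WithBot.recBotCoe with
  | bot => exact absurd h1 (by simp [cB])
  | coe w =>
    induction w using WithTop.recTopCoe with
    | top => exact absurd h2 (by simp [tB])
    | coe m =>
      rw [cB, WithBot.coe_lt_coe, WithTop.coe_lt_coe] at h1
      rcases m with ml | u
      · exact Sum.not_inr_lt_inl h1
      · exact absurd h1 (lt_irrefl _)

lemma covBy_lowE {a b : α} (h : a ⋖ b) : lowE α a ⋖ lowE α b := by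
  refine ⟨lowE_lt_lowE.mpr h.1, ?_⟩
  intro z h1 h2
  induction z using WithBot.recBotCoe with
  | bot => exact absurd h1 (by simp [lowE])
  | coe w =>
    induction w using WithTop.recTopCoe with
    | top =>
      rw [lowE, WithBot.coe_lt_coe] at h2
      exact absurd h2 (not_top_lt)
    | coe m =>
      rw [lowE, WithBot.coe_lt_coe, WithTop.coe_lt_coe] at h1 h2
      rcases m with ml | u
      · rw [Sum.inl_lt_inl_iff] at h1 h2
        rcases ml with p | p
        · cases h1 with
          | inl h1' =>
            cases h2 with
            | inl h2' =>
              replace h1' := (qc_lt_iff _).mp h1'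
              replace h2' := (qc_lt_iff _).mp h2'
              simp only [Equiv.symm_apply_apply] at h1' h2'
              exact h.2 h1' h2'
        · cases h2
      · exact Sum.not_inl_lt_inr h1

lemma covBy_highE {a b : α} (h : a ⋖ b) : highE α a ⋖ highE α b := by
  refine ⟨highE_lt_highE.mpr h.1, ?_⟩
  intro z h1 h2
  induction z using WithBot.recBotCoe with
  | bot => exact absurd h1 (by simp [highE])
  | coe w =>
    induction w using WithTop.recTopCoe with
    | top =>
      rw [highE, WithBot.coe_lt_coe] at h2
      exact absurd h2 (not_top_lt)
    | coe m =>
      rw [highE, WithBot.coe_lt_coe, WithTop.coe_lt_coe] at h1 h2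
      rcases m with ml | u
      · rw [Sum.inl_lt_inl_iff] at h1 h2
        rcases ml with p | p
        · cases h1
        · cases h1 with
          | inr h1' =>
            cases h2 with
            | inr h2' =>
              replace h1' := (qc_lt_iff _).mp h1'
              replace h2' := (qc_lt_iff _).mp h2'
              simp only [Equiv.symm_apply_apply] at h1' h2'
              exact h.2 h1' h2'
      · exact Sum.not_inl_lt_inr h1


lemma highE_le_highE {a b : α} : highE α a ≤ highE α b ↔ a ≤ b := by
  simp only [highE, WithBot.coe_le_coe, WithTop.coe_le_coe, Sum.inl_le_inl_iff,
    Sum.Lex.inr_le_inr_iff, qc_le_iff, Equiv.symm_apply_apply]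
  exact (Sum.Lex.inr_le_inr_iff (α := QC α) (β := QC α)).trans
    ((qc_le_iff _).trans (by simp only [Equiv.symm_apply_apply]))

lemma highE_injective : Function.Injective (highE α) := by
  intro a b h
  exact le_antisymm (highE_le_highE.mp h.le) (highE_le_highE.mp h.ge)

lemma not_cB_le_highE (a : α) : ¬ cB α ≤ highE α a := by
  simp only [cB, highE, WithBot.coe_le_coe, WithTop.coe_le_coe]
  exact Sum.not_inr_le_inl

lemma not_highE_le_cB (a : α) : ¬ highE α a ≤ cB α := by
  simp only [cB, highE, WithBot.coe_le_coe, WithTop.coe_le_coe]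
  exact Sum.not_inl_le_inr

lemma lowE_ne_highE (a b : α) : lowE α a ≠ highE α b := by
  simp [lowE, highE]

lemma BB_cases (x : BB α) :
    x = sB α ∨ x = tB α ∨ x = cB α ∨ (∃ a, x = lowE α a) ∨ (∃ a, x = highE α a) := by
  induction x using WithBot.recBotCoe with
  | bot => exact Or.inl rfl
  | coe w =>
    induction w using WithTop.recTopCoe with
    | top => exact Or.inr (Or.inl rfl)
    | coe m =>
      rcases m with ml | u
      · rcases ml with p | p
        · refine Or.inr (Or.inr (Or.inr (Or.inl ⟨(Fintype.equivFin α).symm p, ?_⟩)))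
          simp only [lowE, Equiv.apply_symm_apply]
          exact congrArg (fun q : Fin (Fintype.card α) =>
            ((((Sum.inl (toLex (Sum.inl q))) : MidL α) : WithTop (MidL α)) : BB α))
            ((Fintype.equivFin α).apply_symm_apply p).symm
        · refine Or.inr (Or.inr (Or.inr (Or.inr ⟨(Fintype.equivFin α).symm p, ?_⟩)))
          simp only [highE, Equiv.apply_symm_apply]
          exact congrArg (fun q : Fin (Fintype.card α) =>
            ((((Sum.inl (toLex (Sum.inr q))) : MidL α) : WithTop (MidL α)) : BB α))
            ((Fintype.equivFin α).apply_symm_apply p).symm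
      · exact Or.inr (Or.inr (Or.inl (by rcases u; rfl)))

end Construction

/-- Simple lifting step: every finite poset of width `w ≥ 1` can be lifted to a poset
of width `w + 1` whose queue-number is larger by at least `1`. -/
theorem exists_lift_width_plus_one
    (α : Type*) [Fintype α] [PartialOrder α] (w : ℕ) (hw : posetWidth α = w) (h1 : 1 ≤ w) :
    ∃ (β : Type) (_ : Fintype β) (_ : PartialOrder β),
      posetWidth β = w + 1 ∧ queueNumber α + 1 ≤ queueNumber β := by
  classical
  unfold posetWidth at hw
  -- basic facts about the antichain set of `α`
  have hSα0 : (0 : ℕ) ∈ {n | ∃ s : Finset α, IsAntichain (· ≤ ·) (s : Set α) ∧ s.card = n} :=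
    ⟨∅, by rw [Finset.coe_empty]; exact Set.subsingleton_empty.isAntichain _, rfl⟩
  have hbddα : BddAbove {n | ∃ s : Finset α, IsAntichain (· ≤ ·) (s : Set α) ∧ s.card = n} := by
    refine ⟨Fintype.card α, ?_⟩
    rintro n ⟨s, -, rfl⟩
    exact Finset.card_le_univ s
  have hmemα : ∃ s : Finset α, IsAntichain (· ≤ ·) (s : Set α) ∧ s.card = w := by
    have h := Nat.sSup_mem ⟨0, hSα0⟩ hbddα
    rw [hw] at h
    exact h
  have hboundα : ∀ s : Finset α, IsAntichain (· ≤ ·) (s : Set α) → s.card ≤ w := by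
    intro s hs
    have h := le_csSup hbddα (Set.mem_setOf.mpr ⟨s, hs, rfl⟩)
    rw [hw] at h
    exact h
  refine ⟨BB α, inferInstance, inferInstance, ?_, ?_⟩
  · -- width computation
    unfold posetWidth
    have hbddB : BddAbove {n | ∃ t : Finset (BB α), IsAntichain (· ≤ ·) (t : Set (BB α)) ∧
        t.card = n} := by
      refine ⟨Fintype.card (BB α), ?_⟩
      rintro n ⟨t, -, rfl⟩
      exact Finset.card_le_univ t
    have hBmem0 : (0 : ℕ) ∈ {n | ∃ t : Finset (BB α),
        IsAntichain (· ≤ ·) (t : Set (BB α)) ∧ t.card = n} :=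
      ⟨∅, by rw [Finset.coe_empty]; exact Set.subsingleton_empty.isAntichain _, rfl⟩
    apply le_antisymm
    · apply csSup_le ⟨0, hBmem0⟩
      rintro n ⟨t, ht, rfl⟩
      by_cases hbot : (sB α) ∈ t
      · have hsub : t ⊆ {sB α} := by
          intro x hx
          rcases eq_or_ne x (sB α) with rfl | hne
          · simp
          · exact absurd bot_le (ht (Finset.mem_coe.mpr hbot) (Finset.mem_coe.mpr hx) hne.symm)
        have := Finset.card_le_card hsub
        simp only [Finset.card_singleton] at this
        omega
      · by_cases htop : (tB α) ∈ t
        · have hsub : t ⊆ {tB α} := by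
            intro x hx
            rcases eq_or_ne x (tB α) with rfl | hne
            · simp
            · refine absurd ?_ (ht (Finset.mem_coe.mpr hx) (Finset.mem_coe.mpr htop) hne)
              show x ≤ tB α
              rcases BB_cases x with rfl | rfl | rfl | ⟨a, rfl⟩ | ⟨a, rfl⟩
              · exact bot_le
              · exact le_refl _
              · exact cB_lt_top.le
              · exact ((lowE_lt_highE a a).trans (highE_lt_top a)).le
              · exact (highE_lt_top a).le
          have := Finset.card_le_card hsub
          simp only [Finset.card_singleton] at this
          omega
        · set t' := t.erase (cB α) with ht'
          have ht'sub : t' ⊆ t := Finset.erase_subset _ _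
          have hforms : ∀ x ∈ t', (∃ a, x = lowE α a) ∨ (∃ a, x = highE α a) := by
            intro x hx
            rcases BB_cases x with rfl | rfl | rfl | h | h
            · exact absurd (ht'sub hx) hbot
            · exact absurd (ht'sub hx) htop
            · exact absurd hx (Finset.notMem_erase _ _)
            · exact Or.inl h
            · exact Or.inr h
          have hcard' : t'.card ≤ w := by
            by_cases hhigh : ∃ b, highE α b ∈ t'
            · -- all elements of t' are of high form
              obtain ⟨b, hb⟩ := hhigh
              have hallhigh : ∀ x ∈ t', ∃ a, x = highE α a := by
                intro x hx
                rcases hforms x hx with ⟨a, rfl⟩ | h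
                · rcases eq_or_ne (lowE α a) (highE α b) with heq | hne
                  · exact absurd heq (lowE_ne_highE a b)
                  · exact absurd ((lowE_lt_highE a b).le)
                      (ht (Finset.mem_coe.mpr (ht'sub hx)) (Finset.mem_coe.mpr (ht'sub hb)) hne)
                · exact h
              set s := Finset.univ.filter (fun a : α => highE α a ∈ t') with hs
              have himage : t' = s.image (highE α) := by
                ext x
                simp only [Finset.mem_image, hs, Finset.mem_filter, Finset.mem_univ, true_and]
                constructor
                · intro hx
                  obtain ⟨a, rfl⟩ := hallhigh x hx
                  exact ⟨a, hx, rfl⟩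
                · rintro ⟨a, ha, rfl⟩
                  exact ha
              have hanti : IsAntichain (· ≤ ·) (s : Set α) := by
                intro a ha b hb hab
                intro hle
                have h1 := (Finset.mem_filter.mp (Finset.mem_coe.mp ha)).2
                have h2 := (Finset.mem_filter.mp (Finset.mem_coe.mp hb)).2
                exact ht (Finset.mem_coe.mpr (ht'sub h1)) (Finset.mem_coe.mpr (ht'sub h2))
                  (fun h => hab (highE_injective h)) (highE_le_highE.mpr hle)
              calc t'.card = s.card := by
                    rw [himage, Finset.card_image_of_injective _ highE_injective]
                _ ≤ w := hboundα s hanti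
            · have halllow : ∀ x ∈ t', ∃ a, x = lowE α a := by
                intro x hx
                rcases hforms x hx with h | ⟨a, rfl⟩
                · exact h
                · exact absurd ⟨a, hx⟩ hhigh
              set s := Finset.univ.filter (fun a : α => lowE α a ∈ t') with hs
              have himage : t' = s.image (lowE α) := by
                ext x
                simp only [Finset.mem_image, hs, Finset.mem_filter, Finset.mem_univ, true_and]
                constructor
                · intro hx
                  obtain ⟨a, rfl⟩ := halllow x hx
                  exact ⟨a, hx, rfl⟩
                · rintro ⟨a, ha, rfl⟩
                  exact ha
              have hanti : IsAntichain (· ≤ ·) (s : Set α) := by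
                intro a ha b hb hab
                intro hle
                have h1 := (Finset.mem_filter.mp (Finset.mem_coe.mp ha)).2
                have h2 := (Finset.mem_filter.mp (Finset.mem_coe.mp hb)).2
                exact ht (Finset.mem_coe.mpr (ht'sub h1)) (Finset.mem_coe.mpr (ht'sub h2))
                  (fun h => hab (lowE_injective h)) (lowE_le_lowE.mpr hle)
              calc t'.card = s.card := by
                    rw [himage, Finset.card_image_of_injective _ lowE_injective]
                _ ≤ w := hboundα s hanti
          have : t ⊆ insert (cB α) t' := by
            intro x hx
            rcases eq_or_ne x (cB α) with rfl | hne
            · exact Finset.mem_insert_self _ _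
            · exact Finset.mem_insert_of_mem (Finset.mem_erase.mpr ⟨hne, hx⟩)
          calc t.card ≤ (insert (cB α) t').card := Finset.card_le_card this
            _ ≤ t'.card + 1 := Finset.card_insert_le _ _
            _ ≤ w + 1 := by omega
    · -- there is an antichain of size w + 1
      obtain ⟨s, hs, hcard⟩ := hmemα
      refine le_csSup hbddB ⟨insert (cB α) (s.image (lowE α)), ?_, ?_⟩
      · intro x hx y hy hxy
        rw [Finset.coe_insert, Set.mem_insert_iff, Finset.coe_image] at hx hy
        rcases hx with rfl | ⟨a, ha, rfl⟩
        · rcases hy with rfl | ⟨b, hb, rfl⟩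
          · exact absurd rfl hxy
          · exact not_cB_le_lowE b
        · rcases hy with rfl | ⟨b, hb, rfl⟩
          · exact not_lowE_le_cB a
          · intro hle
            exact hs ha hb (fun h => hxy (congrArg _ h)) (lowE_le_lowE.mp hle)
      · rw [Finset.card_insert_of_notMem, Finset.card_image_of_injective _ lowE_injective,
          hcard]
        intro hmem
        obtain ⟨a, -, ha⟩ := Finset.mem_image.mp hmem
        exact cB_ne_lowE a ha.symm
  · -- queue number
    set q := queueNumber α with hq
    have key : ∀ L : BB α → ℕ, IsLinearExtension L → HasRainbow L (q + 1) := by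
      intro L hL
      by_cases hq0 : q = 0
      · rw [hq0]
        refine ⟨fun _ => (sB α, cB α), fun i => covBy_bot_cB, fun i => hL.2 _ _ bot_lt_cB, ?_⟩
        intro i j hij
        rw [Fin.lt_def] at hij
        have hi := i.isLt
        have hj := j.isLt
        omega
      · have hq1 : 1 ≤ q := Nat.one_le_iff_ne_zero.mpr hq0
        have hall : ∀ M : α → ℕ, IsLinearExtension M → HasRainbow M q := by
          intro M hM
          by_contra hno
          have hmem : q - 1 ∈ {k | ∃ L : α → ℕ, IsLinearExtension L ∧ ¬ HasRainbow L (k + 1)} := by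
            refine ⟨M, hM, ?_⟩
            have hqq : q - 1 + 1 = q := by omega
            rw [hqq]
            exact hno
          have hle : queueNumber α ≤ q - 1 := Nat.sInf_le hmem
          omega
        have hL2 : IsLinearExtension (fun a : α => L (lowE α a)) := by
          constructor
          · intro a b hab
            exact lowE_injective (hL.1 hab)
          · intro a b hab
            exact hL.2 _ _ (lowE_lt_lowE.mpr hab)
        obtain ⟨e2, he2c, he2m, he2n⟩ := hall _ hL2
        by_cases hcase : ∀ i : Fin q, L (lowE α ((e2 i).2)) < L (cB α)
        · refine ⟨fun i => Fin.cases (sB α, cB α)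
            (fun i => (lowE α (e2 i).1, lowE α (e2 i).2)) i, ?_, ?_, ?_⟩
          · intro i
            rcases Fin.eq_zero_or_eq_succ i with rfl | ⟨i', rfl⟩
            · simpa using covBy_bot_cB
            · simpa using covBy_lowE (he2c i')
          · intro i
            rcases Fin.eq_zero_or_eq_succ i with rfl | ⟨i', rfl⟩
            · simpa using hL.2 _ _ bot_lt_cB
            · simpa using he2m i'
          · intro i j hij
            rcases Fin.eq_zero_or_eq_succ j with rfl | ⟨j', rfl⟩
            · exact absurd hij (Fin.not_lt_zero i)
            · rcases Fin.eq_zero_or_eq_succ i with rfl | ⟨i', rfl⟩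
              · constructor
                · simpa using hL.2 _ _ (bot_lt_lowE ((e2 j').1))
                · simpa using hcase j'
              · have hij' : i' < j' := by
                  rwa [Fin.succ_lt_succ_iff] at hij
                constructor
                · simpa using (he2n i' j' hij').1
                · simpa using (he2n i' j' hij').2
        · push_neg at hcase
          obtain ⟨i0, hi0⟩ := hcase
          have hlt : L (cB α) < L (lowE α ((e2 i0).2)) :=
            lt_of_le_of_ne hi0 (fun h => cB_ne_lowE _ (hL.1 h))
          have hL3 : IsLinearExtension (fun a : α => L (highE α a)) := by
            constructor
            · intro a b hab
              exact highE_injective (hL.1 hab)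
            · intro a b hab
              exact hL.2 _ _ (highE_lt_highE.mpr hab)
          obtain ⟨e3, he3c, he3m, he3n⟩ := hall _ hL3
          have hkey : ∀ j : Fin q, L (cB α) < L (highE α ((e3 j).1)) := by
            intro j
            exact hlt.trans (hL.2 _ _ (lowE_lt_highE _ _))
          refine ⟨fun i => Fin.cases (cB α, tB α)
            (fun i => (highE α (e3 i).1, highE α (e3 i).2)) i, ?_, ?_, ?_⟩
          · intro i
            rcases Fin.eq_zero_or_eq_succ i with rfl | ⟨i', rfl⟩
            · simpa using covBy_cB_top
            · simpa using covBy_highE (he3c i')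
          · intro i
            rcases Fin.eq_zero_or_eq_succ i with rfl | ⟨i', rfl⟩
            · simpa using hL.2 _ _ cB_lt_top
            · simpa using he3m i'
          · intro i j hij
            rcases Fin.eq_zero_or_eq_succ j with rfl | ⟨j', rfl⟩
            · exact absurd hij (Fin.not_lt_zero i)
            · rcases Fin.eq_zero_or_eq_succ i with rfl | ⟨i', rfl⟩
              · constructor
                · simpa using hkey j'
                · simpa using hL.2 _ _ (highE_lt_top ((e3 j').2))
              · have hij' : i' < j' := by
                  rwa [Fin.succ_lt_succ_iff] at hij
                constructor
                · simpa using (he3n i' j' hij').1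
                · simpa using (he3n i' j' hij').2
    obtain ⟨L0, hL0⟩ := exists_isLinearExtension (BB α)
    have hSBne : {k | ∃ L : BB α → ℕ, IsLinearExtension L ∧ ¬ HasRainbow L (k + 1)}.Nonempty := by
      refine ⟨Fintype.card (BB α), L0, hL0, fun hr => ?_⟩
      have := hasRainbow_card_le hr
      omega
    show q + 1 ≤ queueNumber (BB α)
    apply le_csInf hSBne
    rintro k ⟨L, hL, hno⟩
    by_contra hlt
    push_neg at hlt
    exact hno (hasRainbow_mono (key L hL) (by omega))
end

section
/- Let Q be a finite poset with r elements and let L_x be a linear extension of Q with elements q_1 < q_2 < ⋯ < q_r in L_x. Let Q' be the poset on the disjoint union of Q and new elements x_1, …, x_r whose order relation is the transitive closure of: the relations of Q, the chain relations x_1 < x_2 < ⋯ < x_r, and the relations q_i < x_i for i = 1, …, r. Then each pair (q_i, x_i) is a cover edge of Q', and for every linear extension L of Q' in which every element of Q precedes every element of {x_1,…,x_r}, the maximum size of a rainbow in L consisting of edges from {(q_i, x_i) : 1 ≤ i ≤ r} equals the maximum length of a sequence of elements of Q that is increasing in L and decreasing in L_x. -/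
/-- Cover edge with respect to an arbitrary strict-order relation `lt`:
`lt a b` and no element strictly between. -/
def CoverRel {β : Type*} (lt : β → β → Prop) (a b : β) : Prop :=
  lt a b ∧ ∀ c : β, ¬ (lt a c ∧ lt c b)

/-- The base relation generating the order of `Q'`: the relations of `Q` on the left,
the chain `x_1 < ⋯ < x_r` on the right, and `q_i < x_i` for each `i`. -/
def baseRel {α : Type*} [PartialOrder α] {r : ℕ} (q : Fin r → α) :
    (α ⊕ Fin r) → (α ⊕ Fin r) → Prop
  | Sum.inl a, Sum.inl b => a < b
  | Sum.inr i, Sum.inr j => i < j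
  | Sum.inl a, Sum.inr i => a = q i
  | Sum.inr _, Sum.inl _ => False

/-- The family `e` of edges forms a rainbow in the vertex ranking `L`:
`(e 0).1 < (e 1).1 < ⋯ < (e (k-1)).1 < (e (k-1)).2 < ⋯ < (e 1).2 < (e 0).2` in `L`. -/
def IsRainbowFam {β : Type*} (L : β → ℕ) {k : ℕ} (e : Fin k → β × β) : Prop :=
  (∀ s : Fin k, L (e s).1 < L (e s).2) ∧
  (∀ s t : Fin k, s < t → L (e s).1 < L (e t).1 ∧ L (e t).2 < L (e s).2)


/-- Upper-bound relation for `Relation.TransGen (baseRel q)`. -/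
def upRel {α : Type*} [PartialOrder α] {r : ℕ} (q : Fin r → α) :
    (α ⊕ Fin r) → (α ⊕ Fin r) → Prop
  | Sum.inl a, Sum.inl b => a < b
  | Sum.inr i, Sum.inr j => i < j
  | Sum.inl a, Sum.inr i => ∃ j, j ≤ i ∧ a ≤ q j
  | Sum.inr _, Sum.inl _ => False

lemma base_le_up {α : Type*} [PartialOrder α] {r : ℕ} (q : Fin r → α) :
    ∀ u v, baseRel q u v → upRel q u v := by
  rintro (a | i) (b | j) h
  · exact h
  · exact ⟨j, le_refl j, le_of_eq h⟩
  · exact h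
  · exact h

lemma upRel_trans {α : Type*} [PartialOrder α] {r : ℕ} (q : Fin r → α) :
    ∀ u v w, upRel q u v → upRel q v w → upRel q u w := by
  rintro (a | i) (b | j) (c | k) h1 h2
  · exact lt_trans h1 h2
  · obtain ⟨j', hj', hle⟩ := h2; exact ⟨j', hj', le_trans (le_of_lt h1) hle⟩
  · exact h2.elim
  · obtain ⟨j', hj', hle⟩ := h1; exact ⟨j', le_trans hj' (le_of_lt h2), hle⟩
  · exact h1.elim
  · exact h1.elim
  · exact h2.elim
  · exact lt_trans h1 h2

/-- Let `Q` be a poset with `r` elements and `Lx` a linear extension enumerating its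
elements as `q 0 < q 1 < ⋯ < q (r-1)`.  In the poset `Q'` on `Q ⊎ {x_1, …, x_r}` whose
order is the transitive closure of the relations of `Q`, the chain relations on the
`x_i`, and `q_i < x_i`, each pair `(q_i, x_i)` is a cover edge; and for every linear
extension `L` of `Q'` placing all of `Q` before all of the `x_i`, the maximum size of a
rainbow of edges from `{(q_i, x_i)}` equals the maximum length of a sequence of
elements of `Q` increasing in `L` and decreasing in `Lx`. -/
theorem lifted_rainbow_eq_maxIncDec
    (α : Type*) [Fintype α] [PartialOrder α] (r : ℕ) (hr : Fintype.card α = r)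
    (q : Fin r → α) (hq : Function.Bijective q)
    (Lx : α → ℕ) (hLxinj : Function.Injective Lx)
    (hLxext : ∀ a b : α, a < b → Lx a < Lx b)
    (henum : ∀ i j : Fin r, i < j → Lx (q i) < Lx (q j)) :
    (∀ i : Fin r,
      CoverRel (Relation.TransGen (baseRel q)) (Sum.inl (q i)) (Sum.inr i)) ∧
    (∀ L : (α ⊕ Fin r) → ℕ, Function.Injective L →
      (∀ u v : α ⊕ Fin r, Relation.TransGen (baseRel q) u v → L u < L v) →
      (∀ (a : α) (i : Fin r), L (Sum.inl a) < L (Sum.inr i)) →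
      sSup {k | ∃ f : Fin k → Fin r,
          IsRainbowFam L (fun s => (Sum.inl (q (f s)), Sum.inr (f s)))}
        = sSup {k | ∃ g : Fin k → α,
            (∀ s t : Fin k, s < t → L (Sum.inl (g s)) < L (Sum.inl (g t))) ∧
            (∀ s t : Fin k, s < t → Lx (g t) < Lx (g s))}) := by

  have transUp : ∀ u v, Relation.TransGen (baseRel q) u v → upRel q u v := by
    intro u v h
    induction h with
    | single h => exact base_le_up q _ _ h
    | tail _ h ih => exact upRel_trans q _ _ _ ih (base_le_up q _ _ h)
  have hmono : ∀ i j : Fin r, i ≤ j → Lx (q i) ≤ Lx (q j) := by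
    intro i j hij
    rcases eq_or_lt_of_le hij with h | h
    · rw [h]
    · exact (henum i j h).le
  have hLxle : ∀ (a : α) (j : Fin r), a ≤ q j → Lx a ≤ Lx (q j) := by
    intro a j h
    rcases eq_or_lt_of_le h with h | h
    · rw [h]
    · exact (hLxext _ _ h).le
  constructor
  · intro i
    refine ⟨Relation.TransGen.single rfl, ?_⟩
    rintro (b | j) ⟨h1, h2⟩
    · have h1' : q i < b := transUp _ _ h1
      obtain ⟨j', hj', hb⟩ := transUp _ _ h2
      exact lt_irrefl (Lx (q i))
        (lt_of_lt_of_le (hLxext _ _ h1') ((hLxle _ _ hb).trans (hmono _ _ hj')))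
    · obtain ⟨j', hj', hb⟩ := transUp _ _ h1
      have hji : j < i := transUp _ _ h2
      exact lt_irrefl (Lx (q i))
        (lt_of_le_of_lt ((hLxle _ _ hb).trans (hmono _ _ hj')) (henum _ _ hji))
  · intro L hLinj hLext hLbelow
    congr 1
    ext k
    simp only [Set.mem_setOf_eq]
    constructor
    · rintro ⟨f, hf1, hf2⟩
      refine ⟨fun s => q (f s), fun s t hst => (hf2 s t hst).1, fun s t hst => ?_⟩
      have h2 : L (Sum.inr (f t)) < L (Sum.inr (f s)) := (hf2 s t hst).2
      have hts : f t < f s := by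
        rcases lt_trichotomy (f t) (f s) with h | h | h
        · exact h
        · rw [h] at h2; exact absurd h2 (lt_irrefl _)
        · exact absurd (hLext _ _ (Relation.TransGen.single
            (show baseRel q (Sum.inr (f s)) (Sum.inr (f t)) from h)))
            (by omega)
      exact henum _ _ hts
    · rintro ⟨g, hg1, hg2⟩
      set e := Equiv.ofBijective q hq with he
      have hqe : ∀ x : α, q (e.symm x) = x := fun x =>
        Equiv.ofBijective_apply_symm_apply q hq x
      refine ⟨fun s => e.symm (g s), ?_, ?_⟩
      · intro s
        simp only [hqe]
        exact hLbelow _ _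
      · intro s t hst
        constructor
        · simp only [hqe]
          exact hg1 s t hst
        · have h2 := hg2 s t hst
          have hts : e.symm (g t) < e.symm (g s) := by
            rcases lt_trichotomy (e.symm (g t)) (e.symm (g s)) with h | h | h
            · exact h
            · exfalso
              have : g t = g s := by
                have := congrArg q h
                rwa [hqe, hqe] at this
              rw [this] at h2; exact lt_irrefl _ h2
            · exfalso
              have := henum _ _ h
              rw [hqe, hqe] at this
              omega
          exact hLext _ _ (Relation.TransGen.single
            (show baseRel q (Sum.inr (e.symm (g t))) (Sum.inr (e.symm (g s))) from hts))
end
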